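/- arXiv:1112.4087 — 7 statements merged into one kernel-verified Lean document; each statement's English description precedes it below -/
import Mathlib

section
/- Let S₁,…,Sₙ be pairwise disjoint polyominoes in ℤ×ℤ, each of which is y-monotone. Then there exists a unidirectional translational ordering in the horizontal direction: a permutation σ of {1,…,n} such that for all k < l and every natural number s, the translate S_{σ(k)} + (s,0) is disjoint from S_{σ(l)}. -/
/-- Two cells of `ℤ × ℤ` are edge-adjacent iff they are at Euclidean distance 1. -/
def EdgeAdj (c d : ℤ × ℤ) : Prop := (c.1 - d.1).natAbs + (c.2 - d.2).natAbs = 1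

/-- A polyomino: a finite nonempty edge-connected set of cells. -/
def IsPolyomino (S : Finset (ℤ × ℤ)) : Prop :=
  S.Nonempty ∧ ∀ c ∈ S, ∀ d ∈ S,
    Relation.ReflTransGen (fun a b => a ∈ S ∧ b ∈ S ∧ EdgeAdj a b) c d

/-- `S` is y-monotone: every row of `S` is an interval of `ℤ`. -/
def YMonotone (S : Finset (ℤ × ℤ)) : Prop :=
  ∀ r a b c : ℤ, (a, r) ∈ S → (c, r) ∈ S → a ≤ b → b ≤ c → (b, r) ∈ S

/-- The horizontal translate `S + (s, 0)`. -/
def translateX (S : Finset (ℤ × ℤ)) (s : ℤ) : Finset (ℤ × ℤ) :=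
  S.image fun c => (c.1 + s, c.2)

/-!
Since rows are intervals and an edge path climbs one row at a time, two disjoint y-monotone
polyominoes `A`, `B` have the same orientation in every row they share: consecutive shared rows
contain a vertical domino of each, which carries the order of `A` and `B` from one row to the
next. So "`A` is left of `B`" is an asymmetric relation on the family, and a horizontal ordering
is a linear extension of its converse; it remains to see that it has no cycles.
For this, take in a finite subfamily the member `c` whose bottom row is highest. If `p` is left
of `c`, `c` is left of `q`, and neither `p` nor `q` starts above `c`, then all three meet the
bottom row of `c`, so `p` is left of `q`: the edges through `c` can be bypassed. Inductively,
every finite subfamily has a member that is left of no other, i.e. the relation is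
well founded, and sorting by its rank gives the ordering.
-/

section Bypass

variable {α β : Type*} [LinearOrder β] {r : α → α → Prop} (h : α → β)

theorem Finset.exists_forall_not_rel_of_bypass [DecidableEq α]
    (hasymm : ∀ a b, r a b → ¬ r b a)
    (hbypass : ∀ p c q, r p c → r c q → h p ≤ h c → h q ≤ h c → p ≠ q → r p q)
    (T : Finset α) (hT : T.Nonempty) : ∃ m ∈ T, ∀ j ∈ T, ¬ r m j := by
  induction T using Finset.induction_on_max_value h with
  | empty => exact absurd hT Finset.not_nonempty_empty
  | insert a s _ hmax ih =>
    rcases s.eq_empty_or_nonempty with rfl | hs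
    · exact ⟨a, by simp, fun j hj hr => by
        rw [Finset.mem_singleton.mp hj] at hr; exact hasymm a a hr hr⟩
    obtain ⟨m, hm, hsink⟩ := ih hs
    by_cases hma : r m a
    · refine ⟨a, Finset.mem_insert_self a s, fun j hj haj => ?_⟩
      rcases Finset.mem_insert.mp hj with rfl | hj
      · exact hasymm j j haj haj
      by_cases hmj : m = j
      · exact hasymm m a hma (hmj ▸ haj)
      exact hsink j hj (hbypass m a j hma haj (hmax m hm) (hmax j hj) hmj)
    · refine ⟨m, Finset.mem_insert_of_mem hm, fun j hj hmj => ?_⟩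
      rcases Finset.mem_insert.mp hj with rfl | hj
      · exact hma hmj
      · exact hsink j hj hmj

theorem wellFounded_flip_of_bypass [Finite α]
    (hasymm : ∀ a b, r a b → ¬ r b a)
    (hbypass : ∀ p c q, r p c → r c q → h p ≤ h c → h q ≤ h c → p ≠ q → r p q) :
    WellFounded (flip r) := by
  classical
  refine WellFounded.wellFounded_iff_has_min.mpr fun s hs => ?_
  obtain ⟨m, hm, hsink⟩ := s.toFinite.toFinset.exists_forall_not_rel_of_bypass h hasymm hbypass
    (by simpa using hs)
  exact ⟨m, by simpa using hm, fun j hj => hsink j (by simpa using hj)⟩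

end Bypass

theorem exists_vertical_pair_of_reflTransGen {S : Finset (ℤ × ℤ)} {c d : ℤ × ℤ} {t : ℤ}
    (hpath : Relation.ReflTransGen (fun a b => a ∈ S ∧ b ∈ S ∧ EdgeAdj a b) c d)
    (hct : c.2 ≤ t) (htd : t < d.2) : ∃ x, (x, t) ∈ S ∧ (x, t + 1) ∈ S := by
  induction hpath with
  | refl => omega
  | @tail b d _ hstep ih =>
    obtain ⟨hb, hd, hadj⟩ := hstep
    rcases lt_or_ge t b.2 with hbt | hbt
    · exact ih hbt
    · unfold EdgeAdj at hadj
      obtain ⟨hb2, hd2, hbd⟩ : b.2 = t ∧ d.2 = t + 1 ∧ b.1 = d.1 := by omega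
      exact ⟨b.1, hb2 ▸ hb, hbd ▸ hd2 ▸ hd⟩

namespace IsPolyomino

variable {S : Finset (ℤ × ℤ)} {c d : ℤ × ℤ} {t : ℤ}

theorem exists_vertical_pair (hS : IsPolyomino S) (hc : c ∈ S) (hd : d ∈ S)
    (hct : c.2 ≤ t) (htd : t < d.2) : ∃ x, (x, t) ∈ S ∧ (x, t + 1) ∈ S :=
  exists_vertical_pair_of_reflTransGen (hS.2 c hc d hd) hct htd

theorem exists_mem_row (hS : IsPolyomino S) (hc : c ∈ S) (hd : d ∈ S)
    (hct : c.2 ≤ t) (htd : t ≤ d.2) : ∃ x, (x, t) ∈ S := by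
  rcases htd.lt_or_eq with htd | rfl
  · obtain ⟨x, hx, -⟩ := hS.exists_vertical_pair hc hd hct htd
    exact ⟨x, hx⟩
  · exact ⟨d.1, hd⟩

theorem exists_mem_row_of_inf'_le (hS : IsPolyomino S) (hd : d ∈ S)
    (hbot : S.inf' hS.1 Prod.snd ≤ t) (htd : t ≤ d.2) : ∃ x, (x, t) ∈ S := by
  obtain ⟨c, hc, hceq⟩ := S.exists_mem_eq_inf' hS.1 Prod.snd
  exact hS.exists_mem_row hc hd (hceq ▸ hbot) htd

end IsPolyomino

def LeftInRow (A B : Finset (ℤ × ℤ)) (r : ℤ) : Prop :=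
  ∀ a c : ℤ, (a, r) ∈ A → (c, r) ∈ B → a < c

def LeftOf (A B : Finset (ℤ × ℤ)) : Prop :=
  ∃ r a c : ℤ, (a, r) ∈ A ∧ (c, r) ∈ B ∧ a < c

section Orientation

variable {A B : Finset (ℤ × ℤ)} (hA : YMonotone A) (hB : YMonotone B) (hAB : Disjoint A B)
include hA hB hAB

theorem leftInRow_of_lt {r a c : ℤ} (ha : (a, r) ∈ A) (hc : (c, r) ∈ B) (hac : a < c) :
    LeftInRow A B r := by
  intro a' c' ha' hc'
  by_contra! hca
  rcases le_or_gt a c' with hac' | hca'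
  · exact Finset.disjoint_left.mp hAB (hA r a c' a' ha ha' hac' hca) hc'
  · exact Finset.disjoint_left.mp hAB ha (hB r c' a c hc' hc hca'.le hac.le)

theorem leftInRow_iff_succ {t x y : ℤ} (hx : (x, t) ∈ A) (hx' : (x, t + 1) ∈ A)
    (hy : (y, t) ∈ B) (hy' : (y, t + 1) ∈ B) : LeftInRow A B t ↔ LeftInRow A B (t + 1) :=
  ⟨fun h => leftInRow_of_lt hA hB hAB hx' hy' (h x y hx hy),
    fun h => leftInRow_of_lt hA hB hAB hx hy (h x y hx' hy')⟩

variable (hPA : IsPolyomino A) (hPB : IsPolyomino B)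
include hPA hPB

theorem leftInRow_iff {r r' a a' b b' : ℤ} (ha : (a, r) ∈ A) (ha' : (a', r') ∈ A)
    (hb : (b, r) ∈ B) (hb' : (b', r') ∈ B) : LeftInRow A B r ↔ LeftInRow A B r' := by
  wlog hrr' : r ≤ r' generalizing r r' a a' b b'
  · exact (this ha' ha hb' hb (le_of_not_ge hrr')).symm
  suffices ∀ t, r ≤ t → t ≤ r' → (LeftInRow A B r ↔ LeftInRow A B t) from this r' hrr' le_rfl
  intro t hrt
  induction t, hrt using Int.leInduction with
  | base => exact fun _ => Iff.rfl
  | succ t hrt ih =>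
    intro htr'
    obtain ⟨x, hx, hx'⟩ := hPA.exists_vertical_pair ha ha' hrt (by omega)
    obtain ⟨y, hy, hy'⟩ := hPB.exists_vertical_pair hb hb' hrt (by omega)
    exact (ih (by omega)).trans (leftInRow_iff_succ hA hB hAB hx hx' hy hy')

theorem LeftOf.leftInRow (h : LeftOf A B) {r a c : ℤ} (ha : (a, r) ∈ A) (hc : (c, r) ∈ B) :
    LeftInRow A B r := by
  obtain ⟨r₀, a₀, c₀, ha₀, hc₀, hlt⟩ := h
  exact (leftInRow_iff hA hB hAB hPA hPB ha₀ ha hc₀ hc).mp (leftInRow_of_lt hA hB hAB ha₀ hc₀ hlt)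

theorem LeftOf.not_leftOf (h : LeftOf A B) : ¬ LeftOf B A := by
  rintro ⟨r, b, a, hb, ha, hba⟩
  exact (h.leftInRow hA hB hAB hPA hPB ha hb a b ha hb).not_gt hba

end Orientation

theorem LeftOf.trans_of_inf'_le {P C Q : Finset (ℤ × ℤ)}
    (hPP : IsPolyomino P) (hPC : IsPolyomino C) (hPQ : IsPolyomino Q)
    (hP : YMonotone P) (hC : YMonotone C) (hQ : YMonotone Q)
    (hPCd : Disjoint P C) (hCQd : Disjoint C Q) (hpc : LeftOf P C) (hcq : LeftOf C Q)
    (hbotP : P.inf' hPP.1 Prod.snd ≤ C.inf' hPC.1 Prod.snd)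
    (hbotQ : Q.inf' hPQ.1 Prod.snd ≤ C.inf' hPC.1 Prod.snd) : LeftOf P Q := by
  obtain ⟨⟨z, t⟩, hz, ht⟩ := C.exists_mem_eq_inf' hPC.1 Prod.snd
  obtain ⟨r₁, a₁, c₁, ha₁, hc₁, -⟩ := id hpc
  obtain ⟨x, hx⟩ := hPP.exists_mem_row_of_inf'_le ha₁ (ht ▸ hbotP) (ht ▸ C.inf'_le Prod.snd hc₁)
  obtain ⟨r₂, c₂, b₂, hc₂, hb₂, -⟩ := id hcq
  obtain ⟨y, hy⟩ := hPQ.exists_mem_row_of_inf'_le hb₂ (ht ▸ hbotQ) (ht ▸ C.inf'_le Prod.snd hc₂)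
  refine ⟨t, x, y, hx, hy, ?_⟩
  exact (hpc.leftInRow hP hC hPCd hPP hPC hx hz x z hx hz).trans
    (hcq.leftInRow hC hQ hCQd hPC hPQ hz hy z y hz hy)

theorem disjoint_translateX_of_not_leftOf {A B : Finset (ℤ × ℤ)} (hAB : Disjoint A B)
    (h : ¬ LeftOf A B) (s : ℕ) : Disjoint (translateX A s) B := by
  rw [Finset.disjoint_left]
  rintro _ hx hy
  obtain ⟨⟨a, r⟩, ha, rfl⟩ := Finset.mem_image.mp hx
  rcases s.eq_zero_or_pos with rfl | hs
  · exact Finset.disjoint_left.mp hAB ha (by simpa using hy)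
  · exact h ⟨r, a, a + s, ha, hy, by omega⟩

/-- A system of pairwise disjoint y-monotone polyominoes admits a unidirectional
translational ordering in the horizontal direction. -/
theorem ymonotone_exists_horizontal_UTO (n : ℕ) (S : Fin n → Finset (ℤ × ℤ))
    (hpoly : ∀ i, IsPolyomino (S i))
    (hdisj : Pairwise fun i j => Disjoint (S i) (S j))
    (hmono : ∀ i, YMonotone (S i)) :
    ∃ σ : Equiv.Perm (Fin n), ∀ k l : Fin n, k < l → ∀ s : ℕ,
      Disjoint (translateX (S (σ k)) s) (S (σ l)) := by
  let L : Fin n → Fin n → Prop := fun i j => i ≠ j ∧ LeftOf (S i) (S j)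
  have hasymm : ∀ i j, L i j → ¬ L j i := fun i j ⟨hij, h⟩ ⟨_, h'⟩ =>
    h.not_leftOf (hmono i) (hmono j) (hdisj hij) (hpoly i) (hpoly j) h'
  let bottom : Fin n → ℤ := fun i => (S i).inf' (hpoly i).1 Prod.snd
  have hbypass : ∀ p c q, L p c → L c q → bottom p ≤ bottom c → bottom q ≤ bottom c → p ≠ q →
      L p q :=
    fun p c q ⟨hpc, h₁⟩ ⟨hcq, h₂⟩ hp hq hpq => ⟨hpq, h₁.trans_of_inf'_le (hpoly p) (hpoly c)
      (hpoly q) (hmono p) (hmono c) (hmono q) (hdisj hpc) (hdisj hcq) h₂ hp hq⟩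
  have : IsWellFounded (Fin n) (flip L) :=
    ⟨wellFounded_flip_of_bypass bottom hasymm hbypass⟩
  let ρ := IsWellFounded.rank (flip L)
  refine ⟨Tuple.sort ρ, fun k l hkl s => ?_⟩
  have hL : ¬ L (Tuple.sort ρ k) (Tuple.sort ρ l) := fun h =>
    (IsWellFounded.rank_lt_of_rel (r := flip L) h).not_ge (Tuple.monotone_sort ρ hkl.le)
  have hkl' : Tuple.sort ρ k ≠ Tuple.sort ρ l := (Equiv.injective _).ne hkl.ne
  exact disjoint_translateX_of_not_leftOf (hdisj hkl') (fun h => hL ⟨hkl', h⟩) s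
end

section
/- Every polyomino consisting of exactly 5 cells is either orthogonally convex or congruent to the U-pentomino, i.e., it is the image of U₀ = {(0,0),(1,0),(2,0),(0,1),(2,1)} under a composition of a translation of ℤ×ℤ with one of the eight symmetries of the square grid (rotations by multiples of 90° and reflections). -/
/-- `S` is x-monotone: every column of `S` is an interval of `ℤ`. -/
def XMonotone (S : Finset (ℤ × ℤ)) : Prop :=
  ∀ c a b d : ℤ, (c, a) ∈ S → (c, d) ∈ S → a ≤ b → b ≤ d → (c, b) ∈ S

/-- `S` is orthogonally convex: it is both x-monotone and y-monotone. -/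
def OrthoConvex (S : Finset (ℤ × ℤ)) : Prop := XMonotone S ∧ YMonotone S

/-- The U-pentomino. -/
def U0 : Finset (ℤ × ℤ) := {(0, 0), (1, 0), (2, 0), (0, 1), (2, 1)}

/-- The eight symmetries of the square grid: rotations by multiples of 90° and reflections. -/
def gridSymmetries : List ((ℤ × ℤ) → (ℤ × ℤ)) :=
  [fun c => (c.1, c.2), fun c => (-c.2, c.1), fun c => (-c.1, -c.2), fun c => (c.2, -c.1),
   fun c => (-c.1, c.2), fun c => (c.1, -c.2), fun c => (c.2, c.1), fun c => (-c.2, -c.1)]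

/-!
Suppose a row of `S` has a gap: `(a, r), (c, r) ∈ S` but `(b, r) ∉ S` with `a < b < c`. The graph
distance `ψ` from `(a, r)` in the grid punctured at `(b, r)` changes by at most one along edges of
`S`, so by connectivity `ψ(S)` contains every integer from `0` to `ψ (c, r) = c - a + 2 ≥ 4`. With
only five cells this forces `c = a + 2` and makes `ψ` injective on `S`; hence the cell of `S` at
distance `k + 1` is adjacent to the one at distance `k`, and tracing this chain back from `(a + 2, r)`
exhibits the bar of a U in the row above or below. A gap in a column becomes a gap in a row after
transposing, and the grid symmetries are stable under transposition.
-/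

theorem Relation.ReflTransGen.exists_rel_crossing {α β : Type*} [LinearOrder β] {R : α → α → Prop}
    {ψ : α → β} {k : β} {p q : α} (h : Relation.ReflTransGen R p q) (hp : ψ p ≤ k)
    (hq : k < ψ q) : ∃ u v, R u v ∧ ψ u ≤ k ∧ k < ψ v := by
  induction h with
  | refl => exact absurd hp (not_le.2 hq)
  | @tail x y _ hxy ih =>
    by_cases hx : k < ψ x
    · exact ih hx
    · exact ⟨x, y, hxy, not_lt.1 hx, hq⟩

theorem IsPolyomino.image {S : Finset (ℤ × ℤ)} (hS : IsPolyomino S) (g : ℤ × ℤ → ℤ × ℤ)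
    (hg : ∀ c d, EdgeAdj c d → EdgeAdj (g c) (g d)) : IsPolyomino (S.image g) := by
  refine ⟨hS.1.image g, ?_⟩
  simp only [Finset.forall_mem_image]
  intro c hc d hd
  exact (hS.2 c hc d hd).lift g fun x y ⟨hx, hy, hxy⟩ =>
    ⟨Finset.mem_image_of_mem g hx, Finset.mem_image_of_mem g hy, hg x y hxy⟩

theorem edgeAdj_swap {c d : ℤ × ℤ} (h : EdgeAdj c d) : EdgeAdj c.swap d.swap := by
  unfold EdgeAdj at *
  simp only [Prod.fst_swap, Prod.snd_swap]
  omega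

theorem yMonotone_image_swap_iff {S : Finset (ℤ × ℤ)} :
    YMonotone (S.image Prod.swap) ↔ XMonotone S := by
  simp [YMonotone, XMonotone]

section Lipschitz

variable {S : Finset (ℤ × ℤ)} {ψ : ℤ × ℤ → ℕ}

theorem IsPolyomino.exists_edgeAdj_step (hS : IsPolyomino S)
    (hψ : ∀ u ∈ S, ∀ v ∈ S, EdgeAdj u v → ψ v ≤ ψ u + 1) {p q : ℤ × ℤ} (hp : p ∈ S) (hq : q ∈ S)
    {k : ℕ} (hpk : ψ p ≤ k) (hkq : k < ψ q) :
    ∃ u ∈ S, ∃ v ∈ S, EdgeAdj u v ∧ ψ u = k ∧ ψ v = k + 1 := by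
  obtain ⟨u, v, ⟨hu, hv, huv⟩, hu', hv'⟩ := (hS.2 p hp q hq).exists_rel_crossing hpk hkq
  have := hψ u hu v hv huv
  exact ⟨u, hu, v, hv, huv, by omega, by omega⟩

theorem IsPolyomino.Icc_subset_image (hS : IsPolyomino S)
    (hψ : ∀ u ∈ S, ∀ v ∈ S, EdgeAdj u v → ψ v ≤ ψ u + 1) {p q : ℤ × ℤ} (hp : p ∈ S)
    (hq : q ∈ S) : Finset.Icc (ψ p) (ψ q) ⊆ S.image ψ := by
  intro k hk
  obtain ⟨hpk, hkq⟩ := Finset.mem_Icc.1 hk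
  rcases hpk.eq_or_lt with rfl | hpk
  · exact Finset.mem_image_of_mem ψ hp
  obtain ⟨-, -, v, hv, -, -, hvk⟩ :=
    hS.exists_edgeAdj_step hψ hp hq (k := k - 1) (by omega) (by omega)
  exact Finset.mem_image.2 ⟨v, hv, by omega⟩

end Lipschitz

/-- The graph distance from `(a, r)` to `p` in the grid with the cell `(b, r)` removed,
when `a < b`. -/
def puncturedDist (a b r : ℤ) (p : ℤ × ℤ) : ℕ :=
  (p.1 - a).natAbs + (p.2 - r).natAbs + if p.2 = r ∧ b < p.1 then 2 else 0

theorem puncturedDist_le_succ {a b r : ℤ} {p q : ℤ × ℤ} (hp : p ≠ (b, r)) (hq : q ≠ (b, r))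
    (h : EdgeAdj p q) : puncturedDist a b r q ≤ puncturedDist a b r p + 1 := by
  obtain ⟨x, y⟩ := p
  obtain ⟨x', y'⟩ := q
  simp only [EdgeAdj, puncturedDist, ne_eq, Prod.mk.injEq] at *
  split_ifs <;> omega

section Detour

variable {a r y : ℤ} {u : ℤ × ℤ}

theorem EdgeAdj.puncturedDist_eq_three (h : EdgeAdj u (a + 2, r))
    (hu : puncturedDist a (a + 1) r u = 3) : ∃ y, (y = r + 1 ∨ y = r - 1) ∧ u = (a + 2, y) := by
  obtain ⟨x, z⟩ := u
  simp only [EdgeAdj, puncturedDist] at h hu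
  obtain ⟨rfl, hz⟩ : x = a + 2 ∧ (z = r + 1 ∨ z = r - 1) := by split_ifs at hu <;> omega
  exact ⟨z, hz, rfl⟩

theorem EdgeAdj.puncturedDist_eq_two (h : EdgeAdj u (a + 2, y))
    (hu : puncturedDist a (a + 1) r u = 2) : u = (a + 1, y) := by
  obtain ⟨x, z⟩ := u
  simp only [EdgeAdj, puncturedDist, Prod.mk.injEq] at h hu ⊢
  split_ifs at hu <;> omega

theorem EdgeAdj.puncturedDist_eq_one (h : EdgeAdj u (a + 1, y))
    (hu : puncturedDist a (a + 1) r u = 1) (hne : u ≠ (a + 1, r)) : u = (a, y) := by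
  obtain ⟨x, z⟩ := u
  simp only [EdgeAdj, puncturedDist, ne_eq, Prod.mk.injEq] at h hu hne ⊢
  split_ifs at hu <;> omega

end Detour

theorem IsPolyomino.exists_bar_of_row_gap {S : Finset (ℤ × ℤ)} (hS : IsPolyomino S)
    (hcard : S.card = 5) {a b c r : ℤ} (ha : (a, r) ∈ S) (hc : (c, r) ∈ S) (hab : a < b)
    (hbc : b < c) (hb : (b, r) ∉ S) :
    b = a + 1 ∧ c = a + 2 ∧
      ∃ y, (y = r + 1 ∨ y = r - 1) ∧ (a, y) ∈ S ∧ (a + 1, y) ∈ S ∧ (a + 2, y) ∈ S := by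
  set ψ := puncturedDist a b r
  have hψ : ∀ u ∈ S, ∀ v ∈ S, EdgeAdj u v → ψ v ≤ ψ u + 1 := fun u hu v hv =>
    puncturedDist_le_succ (ne_of_mem_of_not_mem hu hb) (ne_of_mem_of_not_mem hv hb)
  have hψa : ψ (a, r) = 0 := by simp [ψ, puncturedDist, hab.le.not_gt]
  have hψc : ψ (c, r) = (c - a).natAbs + 2 := by simp [ψ, puncturedDist, hbc]
  have hle : (S.image ψ).card ≤ 5 := hcard ▸ Finset.card_image_le
  have hge := Finset.card_le_card (hS.Icc_subset_image hψ ha hc)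
  rw [Nat.card_Icc, hψa, hψc] at hge
  obtain ⟨rfl, rfl⟩ : b = a + 1 ∧ c = a + 2 := by omega
  have hinj : Set.InjOn ψ S := Finset.card_image_iff.1 (by omega)
  have hstep : ∀ w ∈ S, ∀ k, ψ w = k + 1 → ∃ u ∈ S, EdgeAdj u w ∧ ψ u = k := by
    intro w hw k hwk
    obtain ⟨u, hu, v, hv, huv, huk, hvk⟩ :=
      hS.exists_edgeAdj_step hψ ha hw (k := k) (by omega) (by omega)
    exact ⟨u, hu, hinj hv hw (hvk.trans hwk.symm) ▸ huv, huk⟩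
  obtain ⟨u₃, hu₃, h₃, hψ₃⟩ := hstep (a + 2, r) hc 3 (by omega)
  obtain ⟨u₂, hu₂, h₂, hψ₂⟩ := hstep u₃ hu₃ 2 hψ₃
  obtain ⟨u₁, hu₁, h₁, hψ₁⟩ := hstep u₂ hu₂ 1 hψ₂
  obtain ⟨y, hy, rfl⟩ := h₃.puncturedDist_eq_three hψ₃
  obtain rfl := h₂.puncturedDist_eq_two hψ₂
  obtain rfl := h₁.puncturedDist_eq_one hψ₁ (ne_of_mem_of_not_mem hu₁ hb)
  exact ⟨rfl, rfl, y, hy, hu₁, hu₂, hu₃⟩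

def IsUPentomino (S : Finset (ℤ × ℤ)) : Prop :=
  ∃ f ∈ gridSymmetries, ∃ v : ℤ × ℤ, S = U0.image fun c => f c + v

section Symmetry

variable {f : ℤ × ℤ → ℤ × ℤ}

theorem injective_of_mem_gridSymmetries (hf : f ∈ gridSymmetries) : Function.Injective f := by
  simp only [gridSymmetries, List.mem_cons, List.not_mem_nil, or_false] at hf
  rcases hf with rfl | rfl | rfl | rfl | rfl | rfl | rfl | rfl <;>
    intro p q h <;> simp only [Prod.mk.injEq, neg_inj] at h <;> exact Prod.ext (by omega) (by omega)

theorem swap_comp_mem_gridSymmetries (hf : f ∈ gridSymmetries) :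
    Prod.swap ∘ f ∈ gridSymmetries := by
  simp only [gridSymmetries, List.mem_cons, List.not_mem_nil, or_false] at hf ⊢
  rcases hf with rfl | rfl | rfl | rfl | rfl | rfl | rfl | rfl <;>
    simp [Function.comp_def, Prod.swap]

theorem IsUPentomino.of_image_subset {S : Finset (ℤ × ℤ)} (hf : f ∈ gridSymmetries) (v : ℤ × ℤ)
    (hsub : (U0.image fun c => f c + v) ⊆ S) (hcard : S.card = 5) : IsUPentomino S := by
  refine ⟨f, hf, v, (Finset.eq_of_subset_of_card_le hsub ?_).symm⟩
  have hinj : Function.Injective fun c => f c + v :=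
    (add_left_injective v).comp (injective_of_mem_gridSymmetries hf)
  rw [hcard, Finset.card_image_of_injective U0 hinj]
  rfl

theorem IsUPentomino.image_swap {S : Finset (ℤ × ℤ)} (h : IsUPentomino S) :
    IsUPentomino (S.image Prod.swap) := by
  obtain ⟨f, hf, v, rfl⟩ := h
  refine ⟨Prod.swap ∘ f, swap_comp_mem_gridSymmetries hf, v.swap, ?_⟩
  rw [Finset.image_image]
  rfl

end Symmetry

theorem IsPolyomino.isUPentomino_of_not_yMonotone {S : Finset (ℤ × ℤ)} (hS : IsPolyomino S)
    (hcard : S.card = 5) (h : ¬YMonotone S) : IsUPentomino S := by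
  simp only [YMonotone, not_forall] at h
  obtain ⟨r, a, b, c, ha, hc, hab, hbc, hb⟩ := h
  replace hab : a < b := hab.lt_of_ne (by rintro rfl; exact hb ha)
  replace hbc : b < c := hbc.lt_of_ne (by rintro rfl; exact hb hc)
  obtain ⟨rfl, rfl, y, rfl | rfl, h₀, h₁, h₂⟩ := hS.exists_bar_of_row_gap hcard ha hc hab hbc hb
  · refine .of_image_subset (f := fun c => (c.1, -c.2)) (by simp [gridSymmetries]) (a, r + 1) ?_
      hcard
    simp [U0, Finset.insert_subset_iff, add_comm, ha, hc, h₀, h₁, h₂]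
  · refine .of_image_subset (f := fun c => (c.1, c.2)) (by simp [gridSymmetries]) (a, r - 1) ?_
      hcard
    simp [U0, Finset.insert_subset_iff, add_comm, ha, hc, h₀, h₁, h₂]

theorem IsPolyomino.isUPentomino_of_not_xMonotone {S : Finset (ℤ × ℤ)} (hS : IsPolyomino S)
    (hcard : S.card = 5) (h : ¬XMonotone S) : IsUPentomino S := by
  have hT : IsPolyomino (S.image Prod.swap) := hS.image Prod.swap fun _ _ => edgeAdj_swap
  have hcardT : (S.image Prod.swap).card = 5 := by
    rw [Finset.card_image_of_injective _ Prod.swap_injective, hcard]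
  have hU := (hT.isUPentomino_of_not_yMonotone hcardT (yMonotone_image_swap_iff.not.2 h)).image_swap
  rwa [Finset.image_image, Prod.swap_swap_eq, Finset.image_id] at hU

/-- Every pentomino is either orthogonally convex or congruent to the U-pentomino
(an image of `U0` under a grid symmetry followed by a translation). -/
theorem pentomino_orthoConvex_or_U (S : Finset (ℤ × ℤ))
    (hpoly : IsPolyomino S) (hcard : S.card = 5) :
    OrthoConvex S ∨
      ∃ f ∈ gridSymmetries, ∃ v : ℤ × ℤ, S = U0.image fun c => f c + v := by
  by_cases hX : XMonotone S
  · by_cases hY : YMonotone S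
    · exact .inl ⟨hX, hY⟩
    · exact .inr (hpoly.isUPentomino_of_not_yMonotone hcard hY)
  · exact .inr (hpoly.isUPentomino_of_not_xMonotone hcard hX)
end

section
/- Every polyomino consisting of at most 5 cells is monotone in at least one axis direction: it is y-monotone or x-monotone. -/
lemma cross_col {S : Finset (ℤ × ℤ)} {c d : ℤ × ℤ} (hc : c ∈ S)
    (h : Relation.ReflTransGen (fun a b => a ∈ S ∧ b ∈ S ∧ EdgeAdj a b) c d)
    {x : ℤ} (h1 : c.1 ≤ x) (h2 : x ≤ d.1) : ∃ y, (x, y) ∈ S := by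
  revert h2
  induction h with
  | refl =>
    intro h2
    obtain rfl : x = c.1 := le_antisymm h2 h1
    exact ⟨c.2, by simpa using hc⟩
  | tail hw hs ih =>
    intro h2
    rename_i e f
    by_cases hx : x ≤ e.1
    · exact ih hx
    · have hadj := hs.2.2
      unfold EdgeAdj at hadj
      have : x = f.1 := by omega
      subst this
      exact ⟨f.2, by simpa using hs.2.1⟩

lemma cut {S : Finset (ℤ × ℤ)} {P : ℤ × ℤ → Prop} {c d : ℤ × ℤ}
    (h : Relation.ReflTransGen (fun a b => a ∈ S ∧ b ∈ S ∧ EdgeAdj a b) c d)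
    (hP : P c) (inv : ∀ x y, x ∈ S → y ∈ S → EdgeAdj x y → P x → P y) : P d := by
  induction h with
  | refl => exact hP
  | tail hw hs ih => exact inv _ _ hs.1 hs.2.1 hs.2.2 ih

lemma neighbor {S : Finset (ℤ × ℤ)} (hpoly : IsPolyomino S) {p q : ℤ × ℤ}
    (hp : p ∈ S) (hq : q ∈ S) (hne : p ≠ q) : ∃ z ∈ S, EdgeAdj p z := by
  rcases (hpoly.2 p hp q hq).cases_head with rfl | ⟨z, hz, _⟩
  · exact absurd rfl hne
  · exact ⟨z, hz.2.1, hz.2.2⟩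

lemma six_le_card {S : Finset (ℤ × ℤ)} {p1 p2 p3 p4 p5 p6 : ℤ × ℤ}
    (h1 : p1 ∈ S) (h2 : p2 ∈ S) (h3 : p3 ∈ S) (h4 : p4 ∈ S) (h5 : p5 ∈ S) (h6 : p6 ∈ S)
    (d12 : p1 ≠ p2) (d13 : p1 ≠ p3) (d14 : p1 ≠ p4) (d15 : p1 ≠ p5) (d16 : p1 ≠ p6)
    (d23 : p2 ≠ p3) (d24 : p2 ≠ p4) (d25 : p2 ≠ p5) (d26 : p2 ≠ p6)
    (d34 : p3 ≠ p4) (d35 : p3 ≠ p5) (d36 : p3 ≠ p6)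
    (d45 : p4 ≠ p5) (d46 : p4 ≠ p6) (d56 : p5 ≠ p6) : 6 ≤ S.card := by
  have hsub : ({p1, p2, p3, p4, p5, p6} : Finset (ℤ × ℤ)) ⊆ S := by
    intro x hx
    simp only [Finset.mem_insert, Finset.mem_singleton] at hx
    rcases hx with rfl | rfl | rfl | rfl | rfl | rfl <;> assumption
  have hc : ({p1, p2, p3, p4, p5, p6} : Finset (ℤ × ℤ)).card = 6 := by
    rw [Finset.card_insert_of_notMem (by simp [d12, d13, d14, d15, d16]),
        Finset.card_insert_of_notMem (by simp [d23, d24, d25, d26]),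
        Finset.card_insert_of_notMem (by simp [d34, d35, d36]),
        Finset.card_insert_of_notMem (by simp [d45, d46]),
        Finset.card_insert_of_notMem (by simp [d56]),
        Finset.card_singleton]
  calc 6 = ({p1, p2, p3, p4, p5, p6} : Finset (ℤ × ℤ)).card := hc.symm
    _ ≤ S.card := Finset.card_le_card hsub

set_option maxHeartbeats 1000000 in
lemma u_case {S : Finset (ℤ × ℤ)} (hpoly : IsPolyomino S) (hcard : S.card ≤ 5)
    {r a s z1 z2 w1 w2 : ℤ} (haS : (a, r) ∈ S) (hcS : (a + 2, r) ∈ S)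
    (hBS : (a + 1, s) ∈ S) (hsr : s ≠ r)
    (hzS : (z1, z2) ∈ S) (hwS : (w1, w2) ∈ S)
    (hz : (z1 = a - 1 ∧ z2 = r) ∨ (z1 = a ∧ (z2 = r + 1 ∨ z2 = r - 1)))
    (hw : (w1 = a + 2 + 1 ∧ w2 = r) ∨ (w1 = a + 2 ∧ (w2 = r + 1 ∨ w2 = r - 1))) :
    XMonotone S := by
  -- S is exactly these five cells
  have hsub : ({((a : ℤ), r), (a + 2, r), (a + 1, s), (z1, z2), (w1, w2)} : Finset (ℤ × ℤ)) ⊆ S := by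
    intro p hp
    simp only [Finset.mem_insert, Finset.mem_singleton] at hp
    rcases hp with rfl | rfl | rfl | rfl | rfl <;> assumption
  have hcardT : ({((a : ℤ), r), (a + 2, r), (a + 1, s), (z1, z2), (w1, w2)} : Finset (ℤ × ℤ)).card = 5 := by
    have n1 : ((a : ℤ), r) ∉ ({(a + 2, r), (a + 1, s), (z1, z2), (w1, w2)} : Finset (ℤ × ℤ)) := by
      simp only [Finset.mem_insert, Finset.mem_singleton, Prod.mk.injEq]
      omega
    have n2 : ((a : ℤ) + 2, r) ∉ ({(a + 1, s), (z1, z2), (w1, w2)} : Finset (ℤ × ℤ)) := by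
      simp only [Finset.mem_insert, Finset.mem_singleton, Prod.mk.injEq]
      omega
    have n3 : ((a : ℤ) + 1, s) ∉ ({(z1, z2), (w1, w2)} : Finset (ℤ × ℤ)) := by
      simp only [Finset.mem_insert, Finset.mem_singleton, Prod.mk.injEq]
      omega
    have n4 : ((z1 : ℤ), z2) ∉ ({(w1, w2)} : Finset (ℤ × ℤ)) := by
      simp only [Finset.mem_singleton, Prod.mk.injEq]
      omega
    rw [Finset.card_insert_of_notMem n1, Finset.card_insert_of_notMem n2,
        Finset.card_insert_of_notMem n3, Finset.card_insert_of_notMem n4,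
        Finset.card_singleton]
  have hSeq : ({((a : ℤ), r), (a + 2, r), (a + 1, s), (z1, z2), (w1, w2)} : Finset (ℤ × ℤ)) = S :=
    Finset.eq_of_subset_of_card_le hsub (by omega)
  have hmem : ∀ p q : ℤ, (p, q) ∈ S ↔ ((p = a ∧ q = r) ∨ (p = a + 2 ∧ q = r) ∨
      (p = a + 1 ∧ q = s) ∨ (p = z1 ∧ q = z2) ∨ (p = w1 ∧ q = w2)) := by
    intro p q
    rw [← hSeq]
    simp [Prod.ext_iff]
  -- neighbor of B
  have hBAne : ((a : ℤ) + 1, s) ≠ (a, r) := by rw [ne_eq, Prod.mk.injEq]; omega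
  obtain ⟨v, hvS, hvadj⟩ := neighbor hpoly hBS haS hBAne
  obtain ⟨v1, v2⟩ := v
  rw [hmem] at hvS
  have hgood : (z1 = a ∧ z2 = s) ∨ (w1 = a + 2 ∧ w2 = s) := by
    unfold EdgeAdj at hvadj
    dsimp only at hvadj
    omega
  clear hvadj hvS
  by_cases hzg : z1 = a ∧ z2 = s
  · by_cases hwg : w1 = a + 2 ∧ w2 = s
    · -- U pentomino: x-monotone
      have hs' : s = r + 1 ∨ s = r - 1 := by omega
      clear hgood hz hw
      intro q x y d hx hd hxy hyd
      rw [hmem] at hx hd ⊢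
      omega
    · -- contradiction: right part disconnected
      exfalso
      have hcut := cut (P := fun p => p.1 ≤ a + 1) (hpoly.2 _ haS _ hcS) (by dsimp only; omega)
        (fun x y hxS hyS hadj hPx => by
          obtain ⟨x1, x2⟩ := x
          obtain ⟨y1, y2⟩ := y
          rw [hmem] at hxS hyS
          unfold EdgeAdj at hadj
          dsimp only at hadj hPx ⊢
          omega)
      dsimp only at hcut
      omega
  · have hwg : w1 = a + 2 ∧ w2 = s := by tauto
    exfalso
    have hcut := cut (P := fun p => a + 1 ≤ p.1) (hpoly.2 _ hcS _ haS) (by dsimp only; omega)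
      (fun x y hxS hyS hadj hPx => by
        obtain ⟨x1, x2⟩ := x
        obtain ⟨y1, y2⟩ := y
        rw [hmem] at hxS hyS
        unfold EdgeAdj at hadj
        dsimp only at hadj hPx ⊢
        omega)
    dsimp only at hcut
    omega


set_option maxHeartbeats 1000000 in
lemma gap_aux {S : Finset (ℤ × ℤ)} (hpoly : IsPolyomino S) (hcard : S.card ≤ 5)
    {r a c : ℤ} (haS : (a, r) ∈ S) (hcS : (c, r) ∈ S)
    (hgap : ∀ x : ℤ, a < x → x < c → (x, r) ∉ S) (hac : a + 2 ≤ c) : XMonotone S := by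
  -- mid cells
  have hmid : ∀ x : ℤ, a < x → x < c → ∃ y, (x, y) ∈ S ∧ y ≠ r := by
    intro x h1 h2
    obtain ⟨y, hy⟩ := cross_col haS (hpoly.2 _ haS _ hcS) (show ((a : ℤ), r).1 ≤ x from h1.le)
      (show x ≤ ((c : ℤ), r).1 from h2.le)
    refine ⟨y, hy, ?_⟩
    rintro rfl
    exact hgap x h1 h2 hy
  have hACne : ((a : ℤ), r) ≠ (c, r) := by rw [ne_eq, Prod.mk.injEq]; omega
  -- neighbor of A
  obtain ⟨z, hzS, hzadj⟩ := neighbor hpoly haS hcS hACne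
  obtain ⟨z1, z2⟩ := z
  have hz : (z1 = a - 1 ∧ z2 = r) ∨ (z1 = a ∧ (z2 = r + 1 ∨ z2 = r - 1)) := by
    unfold EdgeAdj at hzadj
    simp only at hzadj
    have h4 : (z1 = a - 1 ∧ z2 = r) ∨ (z1 = a + 1 ∧ z2 = r) ∨
        (z1 = a ∧ (z2 = r + 1 ∨ z2 = r - 1)) := by omega
    rcases h4 with h | ⟨h1, h2⟩ | h
    · exact Or.inl h
    · exact absurd (h1 ▸ h2 ▸ hzS) (hgap (a + 1) (by omega) (by omega))
    · exact Or.inr h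
  -- neighbor of C
  obtain ⟨w, hwS, hwadj⟩ := neighbor hpoly hcS haS hACne.symm
  obtain ⟨w1, w2⟩ := w
  have hw : (w1 = c + 1 ∧ w2 = r) ∨ (w1 = c ∧ (w2 = r + 1 ∨ w2 = r - 1)) := by
    unfold EdgeAdj at hwadj
    simp only at hwadj
    have h4 : (w1 = c + 1 ∧ w2 = r) ∨ (w1 = c - 1 ∧ w2 = r) ∨
        (w1 = c ∧ (w2 = r + 1 ∨ w2 = r - 1)) := by omega
    rcases h4 with h | ⟨h1, h2⟩ | h
    · exact Or.inl h
    · exact absurd (h1 ▸ h2 ▸ hwS) (hgap (c - 1) (by omega) (by omega))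
    · exact Or.inr h
  rcases (by omega : c = a + 2 ∨ c = a + 3 ∨ a + 4 ≤ c) with hcase | hcase | hcase
  · subst hcase
    obtain ⟨s, hBS, hsr⟩ := hmid (a + 1) (by omega) (by omega)
    exact u_case hpoly hcard haS hcS hBS hsr hzS hwS hz hw
  · -- c = a + 3 : contradiction
    exfalso
    subst hcase
    obtain ⟨y1, hy1, hy1r⟩ := hmid (a + 1) (by omega) (by omega)
    obtain ⟨y2, hy2, hy2r⟩ := hmid (a + 2) (by omega) (by omega)
    have := six_le_card haS hcS hy1 hy2 hzS hwS
      (by rw [ne_eq, Prod.mk.injEq]; omega) (by rw [ne_eq, Prod.mk.injEq]; omega)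
      (by rw [ne_eq, Prod.mk.injEq]; omega) (by rw [ne_eq, Prod.mk.injEq]; omega)
      (by rw [ne_eq, Prod.mk.injEq]; omega) (by rw [ne_eq, Prod.mk.injEq]; omega)
      (by rw [ne_eq, Prod.mk.injEq]; omega) (by rw [ne_eq, Prod.mk.injEq]; omega)
      (by rw [ne_eq, Prod.mk.injEq]; omega) (by rw [ne_eq, Prod.mk.injEq]; omega)
      (by rw [ne_eq, Prod.mk.injEq]; omega) (by rw [ne_eq, Prod.mk.injEq]; omega)
      (by rw [ne_eq, Prod.mk.injEq]; omega) (by rw [ne_eq, Prod.mk.injEq]; omega)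
      (by rw [ne_eq, Prod.mk.injEq]; omega)
    omega
  · -- a + 4 ≤ c : contradiction
    exfalso
    obtain ⟨y1, hy1, hy1r⟩ := hmid (a + 1) (by omega) (by omega)
    obtain ⟨y2, hy2, hy2r⟩ := hmid (a + 2) (by omega) (by omega)
    obtain ⟨y3, hy3, hy3r⟩ := hmid (a + 3) (by omega) (by omega)
    have := six_le_card haS hcS hy1 hy2 hy3 hzS
      (by rw [ne_eq, Prod.mk.injEq]; omega) (by rw [ne_eq, Prod.mk.injEq]; omega)
      (by rw [ne_eq, Prod.mk.injEq]; omega) (by rw [ne_eq, Prod.mk.injEq]; omega)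
      (by rw [ne_eq, Prod.mk.injEq]; omega) (by rw [ne_eq, Prod.mk.injEq]; omega)
      (by rw [ne_eq, Prod.mk.injEq]; omega) (by rw [ne_eq, Prod.mk.injEq]; omega)
      (by rw [ne_eq, Prod.mk.injEq]; omega) (by rw [ne_eq, Prod.mk.injEq]; omega)
      (by rw [ne_eq, Prod.mk.injEq]; omega) (by rw [ne_eq, Prod.mk.injEq]; omega)
      (by rw [ne_eq, Prod.mk.injEq]; omega) (by rw [ne_eq, Prod.mk.injEq]; omega)
      (by rw [ne_eq, Prod.mk.injEq]; omega)
    omega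

set_option maxHeartbeats 1000000 in
/-- Every polyomino with at most 5 cells is monotone in at least one axis direction. -/
theorem polyomino_card_le_five_monotone (S : Finset (ℤ × ℤ))
    (hpoly : IsPolyomino S) (hcard : S.card ≤ 5) : YMonotone S ∨ XMonotone S := by
  by_cases hY : YMonotone S
  · exact Or.inl hY
  -- extract a gap in some row r
  simp only [YMonotone, not_forall] at hY
  obtain ⟨r, a0, b0, c0, hA0, hC0, hab0, hbc0, hB0⟩ := hY
  -- minimize the gap
  set T1 : Finset ℤ := (Finset.Icc a0 b0).filter (fun x => (x, r) ∈ S) with hT1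
  have hT1ne : T1.Nonempty := ⟨a0, by simp [hT1, hab0, hA0]⟩
  set a : ℤ := T1.max' hT1ne with ha
  have haT1 : a ∈ T1 := T1.max'_mem hT1ne
  have haS : (a, r) ∈ S := (Finset.mem_filter.1 haT1).2
  have hab : a < b0 := by
    have h1 : a ≤ b0 := (Finset.mem_Icc.1 (Finset.mem_filter.1 haT1).1).2
    rcases lt_or_eq_of_le h1 with h | h
    · exact h
    · exact absurd (h ▸ haS) hB0
  set T2 : Finset ℤ := (Finset.Icc b0 c0).filter (fun x => (x, r) ∈ S) with hT2
  have hT2ne : T2.Nonempty := ⟨c0, by simp [hT2, hbc0, hC0]⟩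
  set c : ℤ := T2.min' hT2ne with hc
  have hcT2 : c ∈ T2 := T2.min'_mem hT2ne
  have hcS : (c, r) ∈ S := (Finset.mem_filter.1 hcT2).2
  have hbc : b0 < c := by
    have h1 : b0 ≤ c := (Finset.mem_Icc.1 (Finset.mem_filter.1 hcT2).1).1
    rcases lt_or_eq_of_le h1 with h | h
    · exact h
    · exact absurd (h ▸ hcS) hB0
  have hgap : ∀ x : ℤ, a < x → x < c → (x, r) ∉ S := by
    intro x hx1 hx2 hxS
    rcases le_or_gt x b0 with h | h
    · have hxT1 : x ∈ T1 := by
        simp only [hT1, Finset.mem_filter, Finset.mem_Icc]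
        have : a0 ≤ a := by
          have := Finset.le_max' T1 a0 (by simp [hT1, hab0, hA0])
          omega
        exact ⟨⟨by omega, h⟩, hxS⟩
      have := Finset.le_max' T1 x hxT1
      omega
    · have hxT2 : x ∈ T2 := by
        simp only [hT2, Finset.mem_filter, Finset.mem_Icc]
        have : c ≤ c0 := (Finset.mem_Icc.1 (Finset.mem_filter.1 hcT2).1).2
        exact ⟨⟨by omega, by omega⟩, hxS⟩
      have := Finset.min'_le T2 x hxT2
      omega
  have hac : a + 2 ≤ c := by omega
  clear_value a c
  exact Or.inr (gap_aux hpoly hcard haS hcS hgap hac)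
end

section
/- Let U₀ = {(0,0),(1,0),(2,0),(0,1),(2,1)} be the upward-opening U-pentomino with pocket cell (1,1). If P is a polyomino with at most 5 cells that is disjoint from U₀ and contains the pocket cell (1,1), then the union U₀ ∪ P is y-monotone: every row of U₀ ∪ P is an interval of ℤ. -/
/-!
The pocket cell `(1, 1)` has `(1, 2)` as its only neighbour outside `U0`, so `Q = P \ {(1, 1)}` is
empty or a polyomino with at most four cells containing `(1, 2)`. Along a path in a polyomino, a
potential that changes by at most one per step takes every intermediate value, so a polyomino has
more cells than the spread of such a potential. The grid distance from `(1, 2)` confines `Q` to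
distance at most 3, which keeps rows 0 and 1 of `U0 ∪ P` intervals. The grid distance from `(a, r)`
in the plane punctured at `(b, r)` shows that a polyomino with a gap `a < b < c` in row `r` has at
least five cells; hence `Q`, which carries all other rows, is y-monotone.
-/

theorem edgeAdj_comm {c d : ℤ × ℤ} : EdgeAdj c d ↔ EdgeAdj d c := by
  unfold EdgeAdj
  omega

namespace IsPolyomino

variable {S : Finset (ℤ × ℤ)}

theorem exists_eq_of_le_of_le (hS : IsPolyomino S) {f : ℤ × ℤ → ℤ}
    (hf : ∀ u ∈ S, ∀ v ∈ S, EdgeAdj u v → f v ≤ f u + 1) {s t : ℤ × ℤ} (hs : s ∈ S)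
    (ht : t ∈ S) {k : ℤ} (hsk : f s ≤ k) (hkt : k ≤ f t) : ∃ u ∈ S, f u = k := by
  have hst := hS.2 s hs t ht
  clear ht
  induction hst with
  | refl => exact ⟨s, hs, le_antisymm hsk hkt⟩
  | @tail b c _ hbc ih =>
    by_cases hkb : k ≤ f b
    · exact ih hkb
    · exact ⟨c, hbc.2.1, le_antisymm (by linarith [hf b hbc.1 c hbc.2.1 hbc.2.2]) hkt⟩

theorem sub_lt_card (hS : IsPolyomino S) {f : ℤ × ℤ → ℤ}
    (hf : ∀ u ∈ S, ∀ v ∈ S, EdgeAdj u v → f v ≤ f u + 1) {s t : ℤ × ℤ} (hs : s ∈ S)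
    (ht : t ∈ S) : f t - f s < S.card := by
  have hsub : Finset.Icc (f s) (f t) ⊆ S.image f := fun k hk => by
    obtain ⟨hsk, hkt⟩ := Finset.mem_Icc.mp hk
    obtain ⟨u, hu, rfl⟩ := hS.exists_eq_of_le_of_le hf hs ht hsk hkt
    exact Finset.mem_image_of_mem f hu
  have hle := (Finset.card_le_card hsub).trans Finset.card_image_le
  rw [Int.card_Icc] at hle
  omega

theorem dist_lt_card (hS : IsPolyomino S) {s t : ℤ × ℤ} (hs : s ∈ S) (ht : t ∈ S) :
    (t.1 - s.1).natAbs + (t.2 - s.2).natAbs < S.card := by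
  have hf : ∀ u ∈ S, ∀ v ∈ S, EdgeAdj u v →
      (((v.1 - s.1).natAbs + (v.2 - s.2).natAbs : ℕ) : ℤ) ≤
        ((u.1 - s.1).natAbs + (u.2 - s.2).natAbs : ℕ) + 1 := by
    intro u _ v _ huv
    unfold EdgeAdj at huv
    omega
  have := hS.sub_lt_card hf hs ht
  simp only [sub_self, Int.natAbs_zero, add_zero, Nat.cast_zero, sub_zero] at this
  omega

theorem yMonotone_of_card_le_four (hS : IsPolyomino S) (hcard : S.card ≤ 4) : YMonotone S := by
  intro r a b c ha hc hab hbc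
  by_contra hb
  have hab' : a < b := lt_of_le_of_ne hab (by rintro rfl; exact hb ha)
  have hbc' : b < c := lt_of_le_of_ne hbc (by rintro rfl; exact hb hc)
  -- the grid distance from `(a, r)` in the plane punctured at `(b, r)`
  let f : ℤ × ℤ → ℤ := fun u =>
    (u.1 - a).natAbs + (u.2 - r).natAbs + if u.2 = r ∧ b < u.1 then 2 else 0
  have hf : ∀ u ∈ S, ∀ v ∈ S, EdgeAdj u v → f v ≤ f u + 1 := by
    rintro ⟨x, y⟩ hu ⟨x', y'⟩ hv huv
    have hu' : ¬(x = b ∧ y = r) := by rintro ⟨rfl, rfl⟩; exact hb hu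
    have hv' : ¬(x' = b ∧ y' = r) := by rintro ⟨rfl, rfl⟩; exact hb hv
    unfold EdgeAdj at huv
    simp only [f]
    split_ifs <;> omega
  have hfa : f (a, r) = 0 := by simp [f]; omega
  have hfc : f (c, r) = c - a + 2 := by simp [f, hbc']; omega
  have := hS.sub_lt_card hf ha hc
  omega

theorem erase_of_forall_adj_eq (hS : IsPolyomino S) {p q : ℤ × ℤ} (hp : p ∈ S) (hq : q ∈ S)
    (hqp : q ≠ p) (hadj : ∀ v ∈ S, EdgeAdj p v → v = q) : IsPolyomino (S.erase p) := by
  let R : ℤ × ℤ → ℤ × ℤ → Prop := fun a b => a ∈ S.erase p ∧ b ∈ S.erase p ∧ EdgeAdj a b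
  have : Std.Symm R := ⟨fun a b h => ⟨h.2.1, h.1, edgeAdj_comm.mp h.2.2⟩⟩
  have hreach : ∀ u ∈ S.erase p, Relation.ReflTransGen R q u := by
    intro u hu
    have hpu := hS.2 p hp u (Finset.mem_of_mem_erase hu)
    replace hu := Finset.ne_of_mem_erase hu
    induction hpu with
    | refl => exact absurd rfl hu
    | @tail w v _ hwv ih =>
      by_cases hw : w = p
      · subst hw
        rw [hadj v hwv.2.1 hwv.2.2]
      · exact (ih hw).tail ⟨Finset.mem_erase.mpr ⟨hw, hwv.1⟩,
          Finset.mem_erase.mpr ⟨hu, hwv.2.1⟩, hwv.2.2⟩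
  exact ⟨⟨q, Finset.mem_erase.mpr ⟨hqp, hq⟩⟩, fun c hc d hd =>
    (Std.Symm.symm _ _ (hreach c hc)).trans (hreach d hd)⟩

theorem exists_adj_of_ne (hS : IsPolyomino S) {p u : ℤ × ℤ} (hp : p ∈ S) (hu : u ∈ S)
    (hne : u ≠ p) : ∃ v ∈ S, EdgeAdj p v := by
  rcases (hS.2 p hp u hu).cases_head with rfl | ⟨v, hpv, _⟩
  · exact absurd rfl hne
  · exact ⟨v, hpv.2.1, hpv.2.2⟩

end IsPolyomino

theorem eq_of_edgeAdj_pocket {v : ℤ × ℤ} (hv : v ∉ U0) (hadj : EdgeAdj (1, 1) v) :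
    v = (1, 2) := by
  obtain ⟨x, y⟩ := v
  simp only [U0, Finset.mem_insert, Finset.mem_singleton, Prod.mk.injEq, not_or] at hv
  unfold EdgeAdj at hadj
  simp only [Prod.mk.injEq]
  omega

theorem isPolyomino_erase_pocket {P : Finset (ℤ × ℤ)} (hpoly : IsPolyomino P) (hdisj : Disjoint P U0)
    (hpocket : ((1 : ℤ), (1 : ℤ)) ∈ P) (hne : (P.erase (1, 1)).Nonempty) :
    IsPolyomino (P.erase (1, 1)) ∧ ((1 : ℤ), (2 : ℤ)) ∈ P.erase (1, 1) := by
  have hadj : ∀ v ∈ P, EdgeAdj (1, 1) v → v = (1, 2) := fun v hv =>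
    eq_of_edgeAdj_pocket (Finset.disjoint_left.mp hdisj hv)
  obtain ⟨u, hu⟩ := hne
  obtain ⟨v, hv, hpv⟩ :=
    hpoly.exists_adj_of_ne hpocket (Finset.mem_of_mem_erase hu) (Finset.ne_of_mem_erase hu)
  have h12 : ((1 : ℤ), (2 : ℤ)) ∈ P := hadj v hv hpv ▸ hv
  exact ⟨hpoly.erase_of_forall_adj_eq hpocket h12 (by decide) hadj,
    Finset.mem_erase.mpr ⟨by decide, h12⟩⟩

theorem yMonotone_U0_union_insert_pocket {Q : Finset (ℤ × ℤ)}
    (hnear : ∀ u ∈ Q, (u.1 - 1).natAbs + (u.2 - 2).natAbs ≤ 3) (hmono : YMonotone Q) :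
    YMonotone (U0 ∪ insert (1, 1) Q) := by
  intro r a b c ha hc hab hbc
  have hrow : ∀ x, (x, r) ∈ U0 ∪ insert (1, 1) Q ↔
      ((r = 0 ∨ r = 1) ∧ 0 ≤ x ∧ x ≤ 2) ∨ (x, r) ∈ Q := by
    intro x
    simp only [Finset.mem_union, Finset.mem_insert, ← or_assoc]
    refine or_congr_left ?_
    simp only [U0, Finset.mem_insert, Finset.mem_singleton, Prod.mk.injEq]
    omega
  rw [hrow] at ha hc ⊢
  by_cases hr : r = 0 ∨ r = 1
  · have hQrow : ∀ x, (x, r) ∈ Q → -1 ≤ x ∧ x ≤ 3 := by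
      intro x hx
      have := hnear _ hx
      omega
    by_cases hb0 : b < 0
    · have haQ : (a, r) ∈ Q := ha.resolve_left (by omega)
      obtain rfl : b = a := by have := hQrow a haQ; omega
      exact Or.inr haQ
    by_cases hb2 : 2 < b
    · have hcQ : (c, r) ∈ Q := hc.resolve_left (by omega)
      obtain rfl : b = c := by have := hQrow c hcQ; omega
      exact Or.inr hcQ
    exact Or.inl ⟨hr, by omega, by omega⟩
  · simp only [hr, false_and, false_or] at ha hc ⊢
    exact hmono r a b c ha hc hab hbc

/-- If a polyomino `P` with at most 5 cells is disjoint from the U-pentomino `U0` and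
contains its pocket cell `(1, 1)`, then `U0 ∪ P` is y-monotone. -/
theorem U_with_pocket_filler_yMonotone (P : Finset (ℤ × ℤ))
    (hpoly : IsPolyomino P) (hcard : P.card ≤ 5)
    (hdisj : Disjoint P U0) (hpocket : ((1 : ℤ), (1 : ℤ)) ∈ P) :
    YMonotone (U0 ∪ P) := by
  have hQcard : (P.erase (1, 1)).card ≤ 4 := by rw [Finset.card_erase_of_mem hpocket]; omega
  rw [← Finset.insert_erase hpocket]
  obtain hQ | hQ := (P.erase (1, 1)).eq_empty_or_nonempty
  · rw [hQ]
    exact yMonotone_U0_union_insert_pocket (by simp) (by simp [YMonotone])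
  obtain ⟨hQpoly, h12⟩ := isPolyomino_erase_pocket hpoly hdisj hpocket hQ
  refine yMonotone_U0_union_insert_pocket (fun u hu => ?_)
    (hQpoly.yMonotone_of_card_le_four hQcard)
  have := hQpoly.dist_lt_card h12 hu
  omega
end

section
/- If S is a polyomino with a least 2 and at most 5 cells, then at most two cells c ∈ S have the property that c has exactly one edge-neighbor in S and that neighbor is vertically adjacent to c (i.e., equals c + (0,1) or c + (0,−1)). -/
instance : DecidableRel EdgeAdj := fun c d => by unfold EdgeAdj; infer_instance

/-- `c` has exactly one edge-neighbor in `S`, and that neighbor is vertically adjacent to `c`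
(it equals `c + (0, 1)` or `c + (0, -1)`). -/
def VerticalLeaf (S : Finset (ℤ × ℤ)) (c : ℤ × ℤ) : Prop :=
  (S.filter fun d => EdgeAdj c d) = {(c.1, c.2 + 1)} ∨
  (S.filter fun d => EdgeAdj c d) = {(c.1, c.2 - 1)}

instance (S : Finset (ℤ × ℤ)) : DecidablePred (VerticalLeaf S) := fun c => by
  unfold VerticalLeaf; infer_instance

lemma edgeAdj_symm {c d : ℤ × ℤ} (h : EdgeAdj c d) : EdgeAdj d c := by
  unfold EdgeAdj at *; omega

lemma edgeAdj_irrefl (c : ℤ × ℤ) : ¬ EdgeAdj c c := by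
  unfold EdgeAdj; omega

lemma leaf_spec {S : Finset (ℤ × ℤ)} {c : ℤ × ℤ} (h : VerticalLeaf S c) :
    ∃ n : ℤ × ℤ, n ∈ S ∧ EdgeAdj c n ∧ n.1 = c.1 ∧ (n.2 = c.2 + 1 ∨ n.2 = c.2 - 1) ∧
      ∀ d ∈ S, EdgeAdj c d → d = n := by
  rcases h with h | h
  · refine ⟨(c.1, c.2 + 1), ?_, ?_, rfl, Or.inl rfl, ?_⟩
    · have h1 : (c.1, c.2 + 1) ∈ S.filter fun d => EdgeAdj c d := by
        rw [h]; exact Finset.mem_singleton_self _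
      exact (Finset.mem_filter.1 h1).1
    · have h1 : (c.1, c.2 + 1) ∈ S.filter fun d => EdgeAdj c d := by
        rw [h]; exact Finset.mem_singleton_self _
      exact (Finset.mem_filter.1 h1).2
    · intro d hd hadj
      have h1 : d ∈ S.filter fun d => EdgeAdj c d := Finset.mem_filter.2 ⟨hd, hadj⟩
      rw [h] at h1; exact Finset.mem_singleton.1 h1
  · refine ⟨(c.1, c.2 - 1), ?_, ?_, rfl, Or.inr rfl, ?_⟩
    · have h1 : (c.1, c.2 - 1) ∈ S.filter fun d => EdgeAdj c d := by
        rw [h]; exact Finset.mem_singleton_self _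
      exact (Finset.mem_filter.1 h1).1
    · have h1 : (c.1, c.2 - 1) ∈ S.filter fun d => EdgeAdj c d := by
        rw [h]; exact Finset.mem_singleton_self _
      exact (Finset.mem_filter.1 h1).2
    · intro d hd hadj
      have h1 : d ∈ S.filter fun d => EdgeAdj c d := Finset.mem_filter.2 ⟨hd, hadj⟩
      rw [h] at h1; exact Finset.mem_singleton.1 h1

/-- If two vertical leaves are adjacent, every cell of `S` is one of them. -/
lemma pair_closed {S : Finset (ℤ × ℤ)} (hpoly : IsPolyomino S) {a b : ℤ × ℤ}
    (haS : a ∈ S) (hbS : b ∈ S) (ha : VerticalLeaf S a) (hb : VerticalLeaf S b)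
    (hab : EdgeAdj a b) : ∀ e ∈ S, e = a ∨ e = b := by
  obtain ⟨na, _, _, _, _, huna⟩ := leaf_spec ha
  obtain ⟨nb, _, _, _, _, hunb⟩ := leaf_spec hb
  have hna : na = b := (huna b hbS hab).symm
  have hnb : nb = a := (hunb a haS (edgeAdj_symm hab)).symm
  intro e he
  have hpath := hpoly.2 a haS e he
  induction hpath with
  | refl => exact Or.inl rfl
  | tail _ hstep ih =>
    obtain ⟨hm, hf, hadj⟩ := hstep
    rcases ih hm with rfl | rfl
    · exact Or.inr (by rw [← hna]; exact huna _ hf hadj)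
    · exact Or.inl (by rw [← hnb]; exact hunb _ hf hadj)

/-- Core case: two of the three leaves share the same unique neighbor. -/
lemma key2 {S : Finset (ℤ × ℤ)} (hpoly : IsPolyomino S) (h5 : S.card ≤ 5)
    {a b c r r' : ℤ × ℤ}
    (haS : a ∈ S) (hbS : b ∈ S) (hcS : c ∈ S) (hrS : r ∈ S) (hr'S : r' ∈ S)
    (hab : a ≠ b) (hac : a ≠ c) (hbc : b ≠ c)
    (hra : r ≠ a) (hrb : r ≠ b) (hrc : r ≠ c)
    (hr'a : r' ≠ a) (hr'b : r' ≠ b) (hr'c : r' ≠ c) (hrr' : r ≠ r')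
    (har : a.1 = r.1 ∧ (a.2 = r.2 + 1 ∨ a.2 = r.2 - 1))
    (hbr : b.1 = r.1 ∧ (b.2 = r.2 + 1 ∨ b.2 = r.2 - 1))
    (hcr' : c.1 = r'.1 ∧ (c.2 = r'.2 + 1 ∨ c.2 = r'.2 - 1))
    (hauniq : ∀ d ∈ S, EdgeAdj a d → d = r)
    (hbuniq : ∀ d ∈ S, EdgeAdj b d → d = r)
    (hcuniq : ∀ d ∈ S, EdgeAdj c d → d = r') : False := by
  -- S = {a, b, c, r, r'}
  have m1 : a ∉ ({b, c, r, r'} : Finset (ℤ × ℤ)) := by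
    simp only [Finset.mem_insert, Finset.mem_singleton]
    push_neg
    exact ⟨hab, hac, fun h => hra h.symm, fun h => hr'a h.symm⟩
  have m2 : b ∉ ({c, r, r'} : Finset (ℤ × ℤ)) := by
    simp only [Finset.mem_insert, Finset.mem_singleton]
    push_neg
    exact ⟨hbc, fun h => hrb h.symm, fun h => hr'b h.symm⟩
  have m3 : c ∉ ({r, r'} : Finset (ℤ × ℤ)) := by
    simp only [Finset.mem_insert, Finset.mem_singleton]
    push_neg
    exact ⟨fun h => hrc h.symm, fun h => hr'c h.symm⟩
  have m4 : r ∉ ({r'} : Finset (ℤ × ℤ)) := by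
    simp only [Finset.mem_singleton]; exact hrr'
  have hTcard : ({a, b, c, r, r'} : Finset (ℤ × ℤ)).card = 5 := by
    rw [Finset.card_insert_of_notMem m1, Finset.card_insert_of_notMem m2,
        Finset.card_insert_of_notMem m3, Finset.card_insert_of_notMem m4,
        Finset.card_singleton]
  have hTsub : ({a, b, c, r, r'} : Finset (ℤ × ℤ)) ⊆ S := by
    intro x hx
    simp only [Finset.mem_insert, Finset.mem_singleton] at hx
    rcases hx with rfl | rfl | rfl | rfl | rfl <;> assumption
  have hSeq : S = ({a, b, c, r, r'} : Finset (ℤ × ℤ)) :=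
    (Finset.eq_of_subset_of_card_le hTsub (hTcard ▸ h5)).symm
  -- connectivity: r' must be adjacent to r
  have hrr'adj : EdgeAdj r r' := by
    by_contra hne
    have hclosed : ∀ e ∈ S, Relation.ReflTransGen
        (fun a b => a ∈ S ∧ b ∈ S ∧ EdgeAdj a b) c e → e = c ∨ e = r' := by
      intro e he hpath
      induction hpath with
      | refl => exact Or.inl rfl
      | tail _ hstep ih =>
        obtain ⟨hm, hf, hadj⟩ := hstep
        rcases ih hm with rfl | rfl
        · exact Or.inr (hcuniq _ hf hadj)
        · have hfmem := hSeq ▸ hf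
          simp only [Finset.mem_insert, Finset.mem_singleton] at hfmem
          rcases hfmem with rfl | rfl | rfl | rfl | rfl
          · exact absurd (hauniq _ hr'S (edgeAdj_symm hadj)).symm hrr'
          · exact absurd (hbuniq _ hr'S (edgeAdj_symm hadj)).symm hrr'
          · exact Or.inl rfl
          · exact absurd (edgeAdj_symm hadj) hne
          · exact absurd hadj (edgeAdj_irrefl _)
    rcases hclosed r hrS (hpoly.2 c hcS r hrS) with h | h
    · exact hrc h
    · exact hrr' h
  -- r' is horizontally adjacent to r
  have hr'coord : r'.2 = r.2 ∧ (r'.1 - r.1).natAbs = 1 := by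
    unfold EdgeAdj at hrr'adj
    by_contra hcon
    push_neg at hcon
    have hvert : r'.1 = r.1 ∧ (r'.2 = r.2 + 1 ∨ r'.2 = r.2 - 1) := by omega
    obtain ⟨e1, e2⟩ := hvert
    obtain ⟨a1, a2⟩ := har
    obtain ⟨b1, b2⟩ := hbr
    have h' : r' = a ∨ r' = b := by
      rcases a2 with a2 | a2 <;> rcases b2 with b2 | b2 <;> rcases e2 with e2 | e2
      all_goals first
        | (left; exact Prod.ext (by omega) (by omega))
        | (right; exact Prod.ext (by omega) (by omega))
        | (exfalso; exact hab (Prod.ext (by omega) (by omega)))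
    rcases h' with rfl | rfl
    · exact hr'a rfl
    · exact hr'b rfl
  obtain ⟨hc1, hc2⟩ := hcr'
  obtain ⟨hy, hx⟩ := hr'coord
  -- w := (r.1, c.2) equals a or b, and is adjacent to c
  have hwab : ((r.1, c.2) : ℤ × ℤ) = a ∨ ((r.1, c.2) : ℤ × ℤ) = b := by
    obtain ⟨a1, a2⟩ := har
    obtain ⟨b1, b2⟩ := hbr
    rcases a2 with a2 | a2 <;> rcases b2 with b2 | b2 <;> rcases hc2 with h2 | h2
    all_goals first
      | (left; exact Prod.ext (by omega) (by omega))
      | (right; exact Prod.ext (by omega) (by omega))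
      | (exfalso; exact hab (Prod.ext (by omega) (by omega)))
  have hwS : ((r.1, c.2) : ℤ × ℤ) ∈ S := by
    rcases hwab with h | h <;> rw [h] <;> assumption
  have hadjcw : EdgeAdj c (r.1, c.2) := by
    show (c.1 - r.1).natAbs + (c.2 - c.2).natAbs = 1
    omega
  have heq := hcuniq _ hwS hadjcw
  have : r'.1 = r.1 := by rw [← heq]
  omega

/-- Three distinct vertical leaves are impossible. -/
lemma key {S : Finset (ℤ × ℤ)} (hpoly : IsPolyomino S) (h5 : S.card ≤ 5)
    {a b c : ℤ × ℤ} (haS : a ∈ S) (hbS : b ∈ S) (hcS : c ∈ S)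
    (ha : VerticalLeaf S a) (hb : VerticalLeaf S b) (hc : VerticalLeaf S c)
    (hab : a ≠ b) (hac : a ≠ c) (hbc : b ≠ c) : False := by
  obtain ⟨na, hnaS, hadja, hna1, hna2, huna⟩ := leaf_spec ha
  obtain ⟨nb, hnbS, hadjb, hnb1, hnb2, hunb⟩ := leaf_spec hb
  obtain ⟨nc, hncS, hadjc, hnc1, hnc2, hunc⟩ := leaf_spec hc
  -- no two leaves are adjacent
  have hnadj : ∀ x y z : ℤ × ℤ, x ∈ S → y ∈ S → z ∈ S →
      VerticalLeaf S x → VerticalLeaf S y → z ≠ x → z ≠ y → ¬ EdgeAdj x y := by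
    intro x y z hx hy hz hlx hly hzx hzy hxy
    rcases pair_closed hpoly hx hy hlx hly hxy z hz with h | h
    · exact hzx h
    · exact hzy h
  -- neighbors are not leaves among {a,b,c}
  have hnane : na ≠ a := fun h => edgeAdj_irrefl a (h ▸ hadja)
  have hnbne : nb ≠ b := fun h => edgeAdj_irrefl b (h ▸ hadjb)
  have hncne : nc ≠ c := fun h => edgeAdj_irrefl c (h ▸ hadjc)
  have hnab : na ≠ b := fun h => hnadj a b c haS hbS hcS ha hb (Ne.symm hac) (Ne.symm hbc) (h ▸ hadja)
  have hnac : na ≠ c := fun h => hnadj a c b haS hcS hbS ha hc (Ne.symm hab) hbc (h ▸ hadja)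
  have hnba : nb ≠ a := fun h => hnadj b a c hbS haS hcS hb ha (Ne.symm hbc) (Ne.symm hac) (h ▸ hadjb)
  have hnbc : nb ≠ c := fun h => hnadj b c a hbS hcS haS hb hc hab hac (h ▸ hadjb)
  have hnca : nc ≠ a := fun h => hnadj c a b hcS haS hbS hc ha hbc (Ne.symm hab) (h ▸ hadjc)
  have hncb : nc ≠ b := fun h => hnadj c b a hcS hbS haS hc hb hac hab (h ▸ hadjc)
  -- vertical relations
  have hva : a.1 = na.1 ∧ (a.2 = na.2 + 1 ∨ a.2 = na.2 - 1) := ⟨hna1.symm, by omega⟩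
  have hvb : b.1 = nb.1 ∧ (b.2 = nb.2 + 1 ∨ b.2 = nb.2 - 1) := ⟨hnb1.symm, by omega⟩
  have hvc : c.1 = nc.1 ∧ (c.2 = nc.2 + 1 ∨ c.2 = nc.2 - 1) := ⟨hnc1.symm, by omega⟩
  -- not all three neighbors equal
  have hnotall : ¬ (na = nb ∧ na = nc) := by
    rintro ⟨h1, h2⟩
    have h' : a = b ∨ a = c ∨ b = c := by
      obtain ⟨a1, a2⟩ := hva
      obtain ⟨b1, b2⟩ := hvb
      obtain ⟨c1, c2⟩ := hvc
      rw [← h1] at b1 b2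
      rw [← h2] at c1 c2
      rcases a2 with a2 | a2 <;> rcases b2 with b2 | b2 <;> rcases c2 with c2 | c2
      all_goals first
        | (left; exact Prod.ext (by omega) (by omega))
        | (right; left; exact Prod.ext (by omega) (by omega))
        | (right; right; exact Prod.ext (by omega) (by omega))
    rcases h' with h | h | h
    · exact hab h
    · exact hac h
    · exact hbc h
  by_cases h12 : na = nb
  · have h13 : na ≠ nc := fun h => hnotall ⟨h12, h⟩
    exact key2 hpoly h5 haS hbS hcS hnaS hncS hab hac hbc
      hnane hnab hnac hnca hncb hncne h13
      hva (by rw [h12]; exact hvb) hvc huna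
      (fun d hd hadj => by rw [h12]; exact hunb d hd hadj) hunc
  by_cases h13 : na = nc
  · exact key2 hpoly h5 haS hcS hbS hnaS hnbS hac hab (Ne.symm hbc)
      hnane hnac hnab hnba hnbc hnbne h12
      hva (by rw [h13]; exact hvc) hvb huna
      (fun d hd hadj => by rw [h13]; exact hunc d hd hadj) hunb
  by_cases h23 : nb = nc
  · exact key2 hpoly h5 hbS hcS haS hnbS hnaS hbc (Ne.symm hab) (Ne.symm hac)
      hnbne hnbc hnba hnab hnac hnane (fun h => h12 h.symm)
      hvb (by rw [h23]; exact hvc) hva hunb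
      (fun d hd hadj => by rw [h23]; exact hunc d hd hadj) huna
  · have m1 : a ∉ ({b, c, na, nb, nc} : Finset (ℤ × ℤ)) := by
      simp only [Finset.mem_insert, Finset.mem_singleton]
      push_neg
      exact ⟨hab, hac, fun h => hnane h.symm, fun h => hnba h.symm, fun h => hnca h.symm⟩
    have m2 : b ∉ ({c, na, nb, nc} : Finset (ℤ × ℤ)) := by
      simp only [Finset.mem_insert, Finset.mem_singleton]
      push_neg
      exact ⟨hbc, fun h => hnab h.symm, fun h => hnbne h.symm, fun h => hncb h.symm⟩
    have m3 : c ∉ ({na, nb, nc} : Finset (ℤ × ℤ)) := by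
      simp only [Finset.mem_insert, Finset.mem_singleton]
      push_neg
      exact ⟨fun h => hnac h.symm, fun h => hnbc h.symm, fun h => hncne h.symm⟩
    have m4 : na ∉ ({nb, nc} : Finset (ℤ × ℤ)) := by
      simp only [Finset.mem_insert, Finset.mem_singleton]
      push_neg
      exact ⟨h12, h13⟩
    have m5 : nb ∉ ({nc} : Finset (ℤ × ℤ)) := by
      simp only [Finset.mem_singleton]; exact h23
    have hTcard : ({a, b, c, na, nb, nc} : Finset (ℤ × ℤ)).card = 6 := by
      rw [Finset.card_insert_of_notMem m1, Finset.card_insert_of_notMem m2,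
          Finset.card_insert_of_notMem m3, Finset.card_insert_of_notMem m4,
          Finset.card_insert_of_notMem m5, Finset.card_singleton]
    have hTsub : ({a, b, c, na, nb, nc} : Finset (ℤ × ℤ)) ⊆ S := by
      intro x hx
      simp only [Finset.mem_insert, Finset.mem_singleton] at hx
      rcases hx with rfl | rfl | rfl | rfl | rfl | rfl <;> assumption
    have := Finset.card_le_card hTsub
    omega

/-- A polyomino with between 2 and 5 cells has at most two cells whose unique edge-neighbor
in the polyomino is vertically adjacent. -/
theorem polyomino_at_most_two_vertical_leaves (S : Finset (ℤ × ℤ))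
    (hpoly : IsPolyomino S) (h2 : 2 ≤ S.card) (h5 : S.card ≤ 5) :
    (S.filter fun c => VerticalLeaf S c).card ≤ 2 := by
  by_contra h
  push_neg at h
  obtain ⟨a, b, c, ha, hb, hc, hab, hac, hbc⟩ := Finset.two_lt_card_iff.1 h
  rw [Finset.mem_filter] at ha hb hc
  exact key hpoly h5 ha.1 hb.1 hc.1 ha.2 hb.2 hc.2 hab hac hbc
end

section
/- Let 0 < h ≤ w and R = [0,w] × [0,h] ⊆ ℝ². If f : ℝ² → ℝ² is a distance-preserving map whose image f''(R) is contained in the horizontal strip {(x,y) | 0 ≤ y ≤ h}, then f''(R) is a horizontal translate of R: there exists t ∈ ℝ with f''(R) = {(x + t, y) | (x,y) ∈ R}. -/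
/-!
An isometry of the plane is affine, `f (x, y) = f 0 + (a x + c y, b x + d y)` with an orthogonal
matrix, so `|a| = |d|` and `|b| = |c|`. On the rectangle the second coordinate sweeps an interval
of length `|b| w + |d| h`, which the strip forces to be at most `h`; as `h ≤ w` and `|d| ≤ 1`, the
first coordinate then sweeps an interval of length `|a| w + |c| h = |d| w + |b| h ≤ w`. Hence `f`
maps the rectangle into one of its horizontal translates, and onto it because an isometric
self-map of a compact metric space is surjective.
-/

abbrev Plane := EuclideanSpace ℝ (Fin 2)

def rect (w h : ℝ) : Set Plane :=
  {p | p 0 ∈ Set.Icc 0 w ∧ p 1 ∈ Set.Icc 0 h}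

open Set Metric

theorem Isometry.iterate {α : Type*} [PseudoEMetricSpace α] {g : α → α} (hg : Isometry g) :
    ∀ n, Isometry g^[n]
  | 0 => isometry_id
  | n + 1 => (hg.iterate n).comp hg

theorem IsCompact.image_eq_self_of_isometry {α : Type*} [MetricSpace α] {s : Set α}
    (hs : IsCompact s) {g : α → α} (hg : Isometry g) (hgs : MapsTo g s s) : g '' s = s := by
  refine hgs.image_subset.antisymm fun x hx => ?_
  by_contra hx'
  obtain ⟨ε, hε, hball⟩ :=
    Metric.isOpen_iff.mp (hs.image hg.continuous).isClosed.isOpen_compl x hx'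
  have horbit : ∀ n, g^[n] x ∈ s := fun n => hgs.iterate n hx
  -- `g^[k + 1] x ∈ g '' s` stays outside `ball x ε`, so the orbit is `ε`-separated.
  have hsep : ∀ m k, ε ≤ dist (g^[m + (k + 1)] x) (g^[m] x) := by
    intro m k
    rw [Function.iterate_add_apply, (hg.iterate m).dist_eq,
      Function.iterate_succ_apply', ← not_lt, ← mem_ball]
    exact fun hk => hball hk (mem_image_of_mem g (horbit k))
  obtain ⟨y, -, φ, hφ, hlim⟩ := hs.tendsto_subseq horbit
  obtain ⟨N, hN⟩ := Metric.cauchySeq_iff'.mp hlim.cauchySeq ε hε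
  obtain ⟨k, hk⟩ := Nat.exists_eq_add_of_lt (hφ N.lt_succ_self)
  have hclose : dist (g^[φ (N + 1)] x) (g^[φ N] x) < ε := hN (N + 1) N.le_succ
  rw [hk, add_assoc] at hclose
  exact (hsep (φ N) k).not_gt hclose

theorem IsCompact.image_eq_of_isometry_of_image_subset {α : Type*} [MetricSpace α] {s : Set α}
    (hs : IsCompact s) {f : α → α} (hf : Isometry f) (e : α ≃ᵢ α) (hfe : f '' s ⊆ e '' s) :
    f '' s = e '' s := by
  have hmaps : MapsTo (e.symm ∘ f) s s := fun x hx => by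
    obtain ⟨y, hy, hyx⟩ := hfe (mem_image_of_mem f hx)
    simpa [← hyx] using hy
  conv_rhs => rw [← hs.image_eq_self_of_isometry (e.symm.isometry.comp hf) hmaps]
  rw [image_comp, image_image]
  simp

lemma abs_mul_add_abs_mul_le_of_forall_mem_Icc {α β k w h m M : ℝ} (hw : 0 ≤ w) (hh : 0 ≤ h)
    (hmem : ∀ x ∈ Icc 0 w, ∀ y ∈ Icc 0 h, k + α * x + β * y ∈ Icc m M) :
    |α| * w + |β| * h ≤ M - m := by
  have h00 := hmem 0 (left_mem_Icc.mpr hw) 0 (left_mem_Icc.mpr hh)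
  have hw0 := hmem w (right_mem_Icc.mpr hw) 0 (left_mem_Icc.mpr hh)
  have h0h := hmem 0 (left_mem_Icc.mpr hw) h (right_mem_Icc.mpr hh)
  have hwh := hmem w (right_mem_Icc.mpr hw) h (right_mem_Icc.mpr hh)
  simp only [mem_Icc, mul_zero, add_zero] at h00 hw0 h0h hwh
  rcases le_total 0 α with hα | hα <;> rcases le_total 0 β with hβ | hβ <;>
    simp only [abs_of_nonneg, abs_of_nonpos, hα, hβ] <;> linarith

lemma mul_mem_Icc_min_of_mem_Icc {α x w : ℝ} (hx : x ∈ Icc 0 w) :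
    α * x ∈ Icc (min 0 (α * w)) (min 0 (α * w) + |α| * w) := by
  obtain ⟨hx0, hxw⟩ := hx
  rcases le_total 0 α with hα | hα
  · rw [min_eq_left (by nlinarith), abs_of_nonneg hα]
    constructor <;> nlinarith
  · rw [min_eq_right (by nlinarith), abs_of_nonpos hα]
    constructor <;> nlinarith

lemma exists_forall_mul_add_mul_mem_Icc (α β k w h : ℝ) :
    ∃ m, ∀ x ∈ Icc 0 w, ∀ y ∈ Icc 0 h, k + α * x + β * y ∈ Icc m (m + (|α| * w + |β| * h)) := by
  refine ⟨k + min 0 (α * w) + min 0 (β * h), fun x hx y hy => ?_⟩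
  obtain ⟨hαx, hαx'⟩ := mul_mem_Icc_min_of_mem_Icc (α := α) hx
  obtain ⟨hβy, hβy'⟩ := mul_mem_Icc_min_of_mem_Icc (α := β) hy
  constructor <;> linarith

lemma abs_mul_add_abs_mul_le_of_orthonormal {a b c d w h : ℝ} (hab : a ^ 2 + b ^ 2 = 1)
    (hcd : c ^ 2 + d ^ 2 = 1) (horth : a * c + b * d = 0) (hhw : h ≤ w)
    (hbd : |b| * w + |d| * h ≤ h) : |a| * w + |c| * h ≤ w := by
  have had : a ^ 2 = d ^ 2 := by
    linear_combination (-a ^ 2) * hcd + d ^ 2 * hab + (a * c - b * d) * horth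
  have hcb : c ^ 2 = b ^ 2 := by linear_combination hcd - hab + had
  have hd : |d| ≤ 1 := abs_le_one_iff_mul_self_le_one.mpr (by nlinarith)
  rw [sq_eq_sq_iff_abs_eq_abs] at had hcb
  calc |a| * w + |c| * h = |d| * w + |b| * h := by rw [had, hcb]
    _ ≤ |d| * w + |b| * w := by gcongr
    _ ≤ |d| * w + (1 - |d|) * h := by linarith
    _ ≤ |d| * w + (1 - |d|) * w := by gcongr
    _ = w := by ring

lemma Plane.eq_smul_add_smul (p : Plane) :
    p = p 0 • EuclideanSpace.single 0 1 + p 1 • EuclideanSpace.single 1 1 := by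
  ext i; fin_cases i <;> simp

lemma Isometry.exists_plane_coords {f : Plane → Plane} (hf : Isometry f) :
    ∃ a b c d : ℝ, (a ^ 2 + b ^ 2 = 1 ∧ c ^ 2 + d ^ 2 = 1 ∧ a * c + b * d = 0) ∧
      ∀ p : Plane, f p 0 = f 0 0 + a * p 0 + c * p 1 ∧ f p 1 = f 0 1 + b * p 0 + d * p 1 := by
  set A := hf.affineIsometryOfStrictConvexSpace.linearIsometry
  set u := A (EuclideanSpace.single 0 1)
  set v := A (EuclideanSpace.single 1 1)
  have hfA : ∀ p, f p = f 0 + p 0 • u + p 1 • v := by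
    intro p
    have := hf.affineIsometryOfStrictConvexSpace.map_vadd 0 p
    simp only [vadd_eq_add, add_zero, affineIsometryOfStrictConvexSpace_apply] at this
    rw [this, add_assoc, ← map_smul, ← map_smul, ← map_add, ← Plane.eq_smul_add_smul, add_comm]
  have huu := A.inner_map_map (EuclideanSpace.single 0 (1 : ℝ)) (EuclideanSpace.single 0 1)
  have hvv := A.inner_map_map (EuclideanSpace.single 1 (1 : ℝ)) (EuclideanSpace.single 1 1)
  have huv := A.inner_map_map (EuclideanSpace.single 0 (1 : ℝ)) (EuclideanSpace.single 1 1)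
  simp only [PiLp.inner_apply, Fin.sum_univ_two, RCLike.inner_apply, conj_trivial,
    PiLp.single_eq_same, PiLp.single_eq_of_ne, ne_eq, one_ne_zero, zero_ne_one,
    not_false_eq_true, mul_one, mul_zero, add_zero, zero_add] at huu hvv huv
  refine ⟨u 0, u 1, v 0, v 1, ⟨by linear_combination huu, by linear_combination hvv,
    by linear_combination huv⟩, fun p => ⟨?_, ?_⟩⟩ <;>
  · rw [hfA p]
    simp only [PiLp.add_apply, PiLp.smul_apply, smul_eq_mul]
    ring

lemma isCompact_rect (w h : ℝ) : IsCompact (rect w h) := by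
  have : rect w h = PiLp.homeomorph 2 (fun _ : Fin 2 => ℝ) ⁻¹' univ.pi ![Icc 0 w, Icc 0 h] := by
    ext p
    simp only [rect, mem_preimage, mem_univ_pi, Fin.forall_fin_two]; rfl
  rw [this, Homeomorph.isCompact_preimage]
  exact isCompact_univ_pi fun i => by fin_cases i <;> exact isCompact_Icc

lemma setOf_translate_eq_image (w h t : ℝ) :
    {q : Plane | ∃ p ∈ rect w h, q 0 = p 0 + t ∧ q 1 = p 1} =
      (· + EuclideanSpace.single 0 t) '' rect w h := by
  ext q
  constructor
  · rintro ⟨p, hp, h0, h1⟩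
    exact ⟨p, hp, by ext i; fin_cases i <;> simp [h0, h1]⟩
  · rintro ⟨p, hp, rfl⟩
    exact ⟨p, hp, by simp, by simp⟩

/-- If a distance-preserving map of the plane sends the rectangle `[0, w] × [0, h]`
(with `0 < h ≤ w`) into the horizontal strip `0 ≤ y ≤ h`, then the image of the rectangle
is a horizontal translate of the rectangle. -/
theorem isometry_rect_in_strip_is_horizontal_translate (w h : ℝ) (hh : 0 < h) (hhw : h ≤ w)
    (f : Plane → Plane) (hf : Isometry f)
    (hsub : f '' rect w h ⊆ {p : Plane | p 1 ∈ Set.Icc 0 h}) :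
    ∃ t : ℝ, f '' rect w h = {q : Plane | ∃ p ∈ rect w h, q 0 = p 0 + t ∧ q 1 = p 1} := by
  obtain ⟨a, b, c, d, ⟨hab, hcd, horth⟩, hcoord⟩ := hf.exists_plane_coords
  have hy : |b| * w + |d| * h ≤ h := by
    have hstrip : ∀ x ∈ Icc 0 w, ∀ y ∈ Icc 0 h, f 0 1 + b * x + d * y ∈ Icc 0 h := by
      intro x hx y hy
      have : f !₂[x, y] 1 ∈ Icc 0 h := hsub (mem_image_of_mem f ⟨hx, hy⟩)
      rwa [(hcoord _).2] at this
    simpa using abs_mul_add_abs_mul_le_of_forall_mem_Icc (hh.le.trans hhw) hh.le hstrip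
  have hx := abs_mul_add_abs_mul_le_of_orthonormal hab hcd horth hhw hy
  obtain ⟨t, ht⟩ := exists_forall_mul_add_mul_mem_Icc a c (f 0 0) w h
  refine ⟨t, ?_⟩
  rw [setOf_translate_eq_image]
  refine (isCompact_rect w h).image_eq_of_isometry_of_image_subset hf (.addRight _) ?_
  rintro _ ⟨p, hp, rfl⟩
  refine ⟨f p - EuclideanSpace.single 0 t, ⟨?_, ?_⟩, sub_add_cancel _ _⟩
  · have hfp := ht _ hp.1 _ hp.2
    rw [← (hcoord p).1, mem_Icc] at hfp
    rw [PiLp.sub_apply, PiLp.single_eq_same, mem_Icc]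
    constructor <;> linarith
  · simpa using hsub (mem_image_of_mem f hp)
end

section
/- Let 0 < h ≤ w and R = [0,w] × [0,h] ⊆ ℝ². Let F : [0,1] → (ℝ² → ℝ²) be such that each F(t) is a distance-preserving map of the plane, F(0) is the identity, (t,x) ↦ F(t)(x) is continuous, and F(t)''(R) ⊆ {(x,y) | 0 ≤ y ≤ h} for all t. Then every F(t) acts on the whole plane as a horizontal translation: for each t there exists c ∈ ℝ with F(t)(x,y) = (x + c, y) for all (x,y) ∈ ℝ². -/
/-!
Every isometry of the plane is affine, `F t p = L t p + F t 0` with `L t` a linear isometry.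
The four corners of the rectangle stay in the strip, so the heights of `L t (w • e₀)` and
`L t (h • e₁)` satisfy `w |(L t e₀) 1| + h |(L t e₁) 1| ≤ h`. Orthogonality gives
`|(L t e₀) 1| = |(L t e₁) 0|`, and since `h ≤ w` this forces `|(L t e₁) 0| + |(L t e₁) 1| ≤ 1`,
so the unit vector `L t e₁` lies on an axis. A continuous path in a finite set is constant, so
`L t e₁ = e₁`; then `L t e₀ ⊥ e₁` is on an axis as well and `L t e₀ = e₀`. Thus `L t = id`,
and the corners `0` and `h • e₁` pin the height of `F t 0` to `0`.
-/

open Set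
open scoped RealInnerProductSpace

local notation "e₀" => EuclideanSpace.single (0 : Fin 2) (1 : ℝ)
local notation "e₁" => EuclideanSpace.single (1 : Fin 2) (1 : ℝ)

theorem Isometry.exists_linearIsometry_eq_add {E F : Type*} [NormedAddCommGroup E]
    [NormedSpace ℝ E] [NormedAddCommGroup F] [NormedSpace ℝ F] [StrictConvexSpace ℝ F]
    {f : E → F} (hf : Isometry f) : ∃ L : E →ₗᵢ[ℝ] F, ∀ p, f p = L p + f 0 :=
  ⟨hf.affineIsometryOfStrictConvexSpace.linearIsometry, fun p => by
    simpa using hf.affineIsometryOfStrictConvexSpace.map_vadd 0 p⟩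

theorem PreconnectedSpace.constant_of_mapsTo_finite {X Y : Type*} [TopologicalSpace X]
    [PreconnectedSpace X] [TopologicalSpace Y] [T1Space Y] {f : X → Y} (hf : Continuous f)
    {S : Set Y} (hS : S.Finite) (hfS : ∀ x, f x ∈ S) (x y : X) : f x = f y :=
  isPreconnected_univ.constant_of_mapsTo hS.isDiscrete hf.continuousOn (fun x _ => hfS x)
    trivial trivial

theorem abs_add_abs_le_of_add_mem_Icc {y a b c : ℝ} (h₀ : y ∈ Icc 0 c) (ha : y + a ∈ Icc 0 c)
    (hb : y + b ∈ Icc 0 c) (hab : y + a + b ∈ Icc 0 c) : |a| + |b| ≤ c := by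
  obtain ⟨_, _⟩ := h₀; obtain ⟨_, _⟩ := ha; obtain ⟨_, _⟩ := hb; obtain ⟨_, _⟩ := hab
  cases abs_cases a <;> cases abs_cases b <;> linarith

theorem mul_eq_zero_of_abs_add_abs_le_one {a b : ℝ} (h : a ^ 2 + b ^ 2 = 1)
    (hle : |a| + |b| ≤ 1) : a * b = 0 := by
  refine abs_nonpos_iff.1 ?_
  rw [abs_mul]
  nlinarith [sq_abs a, sq_abs b, abs_nonneg a, abs_nonneg b]

namespace Plane

theorem inner_eq (x y : Plane) : ⟪x, y⟫ = x 0 * y 0 + x 1 * y 1 := by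
  simp [PiLp.inner_apply, Fin.sum_univ_two, mul_comm]

theorem norm_sq_eq (x : Plane) : ‖x‖ ^ 2 = x 0 ^ 2 + x 1 ^ 2 := by
  rw [← real_inner_self_eq_norm_sq, inner_eq]; ring

theorem ext_iff {x y : Plane} : x = y ↔ x 0 = y 0 ∧ x 1 = y 1 := by
  simp [PiLp.ext_iff, Fin.forall_fin_two]

theorem mem_axes_of_norm_eq_one {v : Plane} (hv : ‖v‖ = 1) (h : v 0 * v 1 = 0) :
    v ∈ ({e₀, -e₀, e₁, -e₁} : Set Plane) := by
  have hsq := norm_sq_eq v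
  rw [hv] at hsq
  simp only [mem_insert_iff, mem_singleton_iff, ext_iff]
  rcases mul_eq_zero.1 h with h0 | h0
  · rcases eq_or_eq_neg_of_sq_eq_sq (v 1) 1 (by nlinarith) with h1 | h1 <;> simp [h0, h1]
  · rcases eq_or_eq_neg_of_sq_eq_sq (v 0) 1 (by nlinarith) with h1 | h1 <;> simp [h0, h1]

theorem sq_apply_one_eq_sq_apply_zero_of_orthonormal {u v : Plane} (hu : ‖u‖ = 1) (hv : ‖v‖ = 1)
    (huv : ⟪u, v⟫ = 0) : u 1 ^ 2 = v 0 ^ 2 := by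
  have hu' := norm_sq_eq u
  have hv' := norm_sq_eq v
  rw [hu] at hu'; rw [hv] at hv'; rw [inner_eq] at huv
  linear_combination u 1 ^ 2 * hv' - v 0 ^ 2 * hu' + (u 1 * v 1 - u 0 * v 0) * huv

theorem linearMap_apply_eq_self {L : Plane →ₗ[ℝ] Plane} (h₀ : L e₀ = e₀) (h₁ : L e₁ = e₁)
    (p : Plane) : L p = p :=
  LinearMap.congr_fun ((EuclideanSpace.basisFun (Fin 2) ℝ).toBasis.ext (f₂ := .id)
    (Fin.forall_fin_two.2 ⟨by simpa using h₀, by simpa using h₁⟩)) p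

end Plane

theorem abs_apply_one_add_abs_le_of_image_rect_subset {w h : ℝ} (hw : 0 ≤ w) (hh : 0 ≤ h)
    (L : Plane →ₗᵢ[ℝ] Plane) (b : Plane)
    (hsub : (fun p => L p + b) '' rect w h ⊆ {p : Plane | p 1 ∈ Icc 0 h}) :
    w * |L e₀ 1| + h * |L e₁ 1| ≤ h := by
  have hmem : ∀ p ∈ rect w h, (L p + b) 1 ∈ Icc 0 h := fun p hp => hsub ⟨p, hp, rfl⟩
  have := abs_add_abs_le_of_add_mem_Icc (y := b 1) (a := w * L e₀ 1) (b := h * L e₁ 1)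
    (by simpa using hmem 0 (by simp [rect, hw, hh]))
    (by simpa [add_comm] using hmem (w • e₀) (by simp [rect, hw, hh]))
    (by simpa [add_comm] using hmem (h • e₁) (by simp [rect, hw, hh]))
    (by simpa [add_comm, add_left_comm, add_assoc] using
      hmem (w • e₀ + h • e₁) (by simp [rect, hw, hh]))
  rwa [abs_mul, abs_mul, abs_of_nonneg hw, abs_of_nonneg hh] at this

theorem LinearIsometry.apply_single_one_mem_axes {w h : ℝ} (hh : 0 < h) (hhw : h ≤ w)
    (L : Plane →ₗᵢ[ℝ] Plane) (hL : w * |L e₀ 1| + h * |L e₁ 1| ≤ h) :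
    L e₁ ∈ ({e₀, -e₀, e₁, -e₁} : Set Plane) := by
  have hv : ‖L e₁‖ = 1 := by simp
  have huv : ⟪L e₀, L e₁⟫ = 0 := by simp [L.inner_map_map, EuclideanSpace.inner_single_left]
  have habs : |L e₀ 1| = |L e₁ 0| := sq_eq_sq_iff_abs_eq_abs _ _ |>.1 <|
    Plane.sq_apply_one_eq_sq_apply_zero_of_orthonormal (by simp) hv huv
  refine Plane.mem_axes_of_norm_eq_one hv (mul_eq_zero_of_abs_add_abs_le_one ?_ ?_)
  · rw [← Plane.norm_sq_eq, hv, one_pow]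
  · rw [habs] at hL
    have : h * |L e₁ 0| ≤ w * |L e₁ 0| := mul_le_mul_of_nonneg_right hhw (abs_nonneg _)
    exact le_of_mul_le_mul_left (by rw [mul_add, mul_one]; linarith) hh

theorem LinearIsometry.apply_single_zero_mem_axes (L : Plane →ₗᵢ[ℝ] Plane) (hL : L e₁ = e₁) :
    L e₀ ∈ ({e₀, -e₀, e₁, -e₁} : Set Plane) := by
  have h₁ : L e₀ 1 = 0 := by
    simpa [hL, EuclideanSpace.inner_single_left, EuclideanSpace.inner_single_right] using
      L.inner_map_map e₀ e₁
  exact Plane.mem_axes_of_norm_eq_one (by simp) (by rw [h₁, mul_zero])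

/-- If a continuous family of distance-preserving maps starting at the identity keeps the
rectangle `[0, w] × [0, h]` (with `0 < h ≤ w`) inside the strip `0 ≤ y ≤ h` at all times,
then every map of the family is a horizontal translation of the whole plane. -/
theorem confined_rect_motion_is_horizontal_translation (w h : ℝ) (hh : 0 < h) (hhw : h ≤ w)
    (F : unitInterval → Plane → Plane)
    (hisom : ∀ t, Isometry (F t))
    (hinit : F 0 = id)
    (hcont : Continuous fun q : unitInterval × Plane => F q.1 q.2)
    (hsub : ∀ t, F t '' rect w h ⊆ {p : Plane | p 1 ∈ Set.Icc 0 h}) :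
    ∀ t, ∃ c : ℝ, ∀ p : Plane, F t p 0 = p 0 + c ∧ F t p 1 = p 1 := by
  have hw : 0 ≤ w := hh.le.trans hhw
  choose L hL using fun t => (hisom t).exists_linearIsometry_eq_add
  have hLc : ∀ p, Continuous fun t => L t p := fun p => by
    have hFc : ∀ q, Continuous fun t => F t q := fun q =>
      hcont.comp (continuous_id.prodMk continuous_const)
    exact ((hFc p).sub (hFc 0)).congr fun t => (eq_sub_of_add_eq (hL t p).symm).symm
  have hL₀ : ∀ p, L 0 p = p := fun p => by simpa [hinit] using (hL 0 p).symm
  have hstrip : ∀ t, (fun p => L t p + F t 0) '' rect w h ⊆ {p : Plane | p 1 ∈ Icc 0 h} :=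
    fun t => funext (hL t) ▸ hsub t
  have he₁ : ∀ t, L t e₁ = e₁ := fun t =>
    (PreconnectedSpace.constant_of_mapsTo_finite (hLc e₁) (toFinite _)
      (fun s => (L s).apply_single_one_mem_axes hh hhw
        (abs_apply_one_add_abs_le_of_image_rect_subset hw hh.le _ _ (hstrip s)))
      t 0).trans (hL₀ e₁)
  have he₀ : ∀ t, L t e₀ = e₀ := fun t =>
    (PreconnectedSpace.constant_of_mapsTo_finite (hLc e₀) (toFinite _)
      (fun s => (L s).apply_single_zero_mem_axes (he₁ s)) t 0).trans (hL₀ e₀)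
  have hid : ∀ t p, L t p = p := fun t =>
    Plane.linearMap_apply_eq_self (L := (L t).toLinearMap) (he₀ t) (he₁ t)
  have hy : ∀ t, F t 0 1 = 0 := fun t => by
    have h₀ : F t 0 1 ∈ Icc 0 h := by
      simpa [hid] using hstrip t ⟨0, by simp [rect, hh.le, hw], rfl⟩
    have h₁ : h + F t 0 1 ∈ Icc 0 h := by
      simpa [hid] using hstrip t ⟨h • e₁, by simp [rect, hh.le, hw], rfl⟩
    linarith [h₀.1, h₁.2]
  intro t
  exact ⟨F t 0 0, fun p => by simp [hL t p, hid, hy]⟩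
end
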